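/- arXiv:2402.13085 — 9 statements merged into one kernel-verified Lean document; each statement's English description precedes it below -/
import Mathlib

section
/- The rewrite relation →_γ on lassos, generated by the rules (ua,va) → (u,av) for a ∈ Σ and (u,v^k) → (u,v) for k > 1, is confluent and strongly normalising. -/
/-- One-step γ-rewriting on lassos (pairs in Σ* × Σ⁺):
`(ua, va) → (u, av)` for `a ∈ Σ`, and `(u, v^k) → (u, v)` for `k > 1`. -/
inductive GammaStep {A : Type} : (List A × List A) → (List A × List A) → Prop
  | g1 (u v : List A) (a : A) : GammaStep (u ++ [a], v ++ [a]) (u, a :: v)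
  | g2 (u v : List A) (k : ℕ) (hk : 1 < k) (hv : v ≠ []) :
      GammaStep (u, (List.replicate k v).flatten) (u, v)

namespace GammaAux

variable {A : Type}

/-- `pw k v = v^k`. -/
def pw (k : ℕ) (v : List A) : List A := (List.replicate k v).flatten

@[simp] lemma pw_zero (v : List A) : pw 0 v = [] := rfl

lemma pw_succ (k : ℕ) (v : List A) : pw (k+1) v = v ++ pw k v := by
  simp [pw, List.replicate_succ]

lemma pw_one (v : List A) : pw 1 v = v := by simp [pw]

lemma pw_add (m n : ℕ) (v : List A) : pw (m+n) v = pw m v ++ pw n v := by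
  induction m with
  | zero => simp
  | succ m ih =>
      have : m + 1 + n = (m + n) + 1 := by omega
      rw [this, pw_succ, pw_succ, ih, List.append_assoc]

lemma pw_length (k : ℕ) (v : List A) : (pw k v).length = k * v.length := by
  induction k with
  | zero => simp
  | succ k ih => rw [pw_succ, List.length_append, ih, Nat.succ_mul]; omega

lemma pw_nil (m : ℕ) : pw m ([] : List A) = [] := by
  induction m with
  | zero => rfl
  | succ m ih => rw [pw_succ, ih]; rfl

/-- rotation identity: `x (t x)^b = (x t)^b x`. -/
lemma rot (b : ℕ) (x t : List A) : x ++ pw b (t ++ x) = pw b (x ++ t) ++ x := by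
  induction b with
  | zero => simp
  | succ b ih =>
      rw [pw_succ, pw_succ]
      calc x ++ ((t ++ x) ++ pw b (t ++ x))
          = (x ++ t) ++ (x ++ pw b (t ++ x)) := by simp [List.append_assoc]
        _ = (x ++ t) ++ (pw b (x ++ t) ++ x) := by rw [ih]
        _ = ((x ++ t) ++ pw b (x ++ t)) ++ x := by simp [List.append_assoc]

/-- Commuting words have a common root. -/
lemma comm_root : ∀ (n : ℕ) (x y : List A), x.length + y.length ≤ n → x ++ y = y ++ x →
    ∃ (z : List A) (m k : ℕ), x = pw m z ∧ y = pw k z := by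
  intro n
  induction n with
  | zero =>
      intro x y hlen _
      have hx : x = [] := List.eq_nil_of_length_eq_zero (by omega)
      have hy : y = [] := List.eq_nil_of_length_eq_zero (by omega)
      exact ⟨[], 0, 0, by simp [hx], by simp [hy]⟩
  | succ n ih =>
      have key : ∀ x y : List A, x.length + y.length ≤ n + 1 → x.length ≤ y.length →
          x ++ y = y ++ x → ∃ (z : List A) (m k : ℕ), x = pw m z ∧ y = pw k z := by
        intro x y hlen hle hcomm
        rcases eq_or_ne x [] with hx | hx
        · exact ⟨y, 0, 1, by simp [hx], by simp [pw_one]⟩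
        · set t := y.drop x.length with ht
          have hxy : y = x ++ t := by
            have h1 : (x ++ y).take x.length = x := List.take_left
            have h2 : (y ++ x).take x.length = y.take x.length :=
              List.take_append_of_le_length hle
            have h3 : y.take x.length = x := by rw [← h2, ← hcomm, h1]
            conv_lhs => rw [← List.take_append_drop x.length y]
            rw [h3, ht]
          have hcomm' : x ++ t = t ++ x := by
            have h0 : x ++ (x ++ t) = x ++ (t ++ x) := by
              conv_lhs => rw [← hxy]
              rw [hcomm, hxy, List.append_assoc]
            exact List.append_cancel_left h0
          have hxpos : 0 < x.length := List.length_pos_iff.mpr hx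
          have hlen' : x.length + t.length ≤ n := by
            have : y.length = x.length + t.length := by rw [hxy]; simp
            omega
          obtain ⟨z, m, k, hxz, htz⟩ := ih x t hlen' hcomm'
          exact ⟨z, m, m + k, hxz, by rw [hxy, hxz, htz, ← pw_add]⟩
      intro x y hlen hcomm
      rcases le_total x.length y.length with hle | hle
      · exact key x y hlen hle hcomm
      · obtain ⟨z, m, k, h1, h2⟩ := key y x (by omega) hle hcomm.symm
        exact ⟨z, k, m, h2, h1⟩

/-- Equal powers have a common root (helper, with a length assumption). -/
lemma pow_common_aux (x y : List A) (a b : ℕ) (ha : 1 ≤ a) (hb : 1 ≤ b)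
    (hw : pw a x = pw b y) (hle : x.length ≤ y.length) :
    ∃ (z : List A) (m k : ℕ), x = pw m z ∧ y = pw k z := by
  obtain ⟨a', rfl⟩ : ∃ a', a = a' + 1 := ⟨a - 1, by omega⟩
  obtain ⟨b', rfl⟩ : ∃ b', b = b' + 1 := ⟨b - 1, by omega⟩
  -- x is a prefix of y
  have hxw : (pw (a' + 1) x).take x.length = x := by rw [pw_succ]; exact List.take_left
  have hyw : (pw (b' + 1) y).take y.length = y := by rw [pw_succ]; exact List.take_left
  have hxy : y = x ++ y.drop x.length := by
    have h3 : y.take x.length = x := by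
      conv_lhs => rw [← hyw]
      rw [List.take_take, min_eq_left hle, ← hw, hxw]
    conv_lhs => rw [← List.take_append_drop x.length y]
    rw [h3]
  set t := y.drop x.length with ht
  have h1 : pw (b' + 1) (x ++ t) = pw (a' + 1) x := by rw [← hxy]; exact hw.symm
  have h2 : pw (b' + 1) (t ++ x) = pw (a' + 1) x := by
    have hrot := rot (b' + 1) x t
    have hself : pw (a' + 1) x ++ x = x ++ pw (a' + 1) x := by
      have e1 : pw (a' + 1 + 1) x = pw (a' + 1) x ++ pw 1 x := pw_add _ 1 x
      have e2 : pw (1 + (a' + 1)) x = pw 1 x ++ pw (a' + 1) x := pw_add 1 _ x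
      rw [pw_one] at e1 e2
      rw [← e1, show a' + 1 + 1 = 1 + (a' + 1) from by omega, e2]
    have : x ++ pw (b' + 1) (t ++ x) = x ++ pw (a' + 1) x := by
      rw [hrot, h1, hself]
    exact List.append_cancel_left this
  have hcomm : x ++ t = t ++ x := by
    have e : pw (b' + 1) (x ++ t) = pw (b' + 1) (t ++ x) := h1.trans h2.symm
    have e2 := congrArg (List.take (x ++ t).length) e
    have hl : (x ++ t).length = (t ++ x).length := by simp; omega
    rw [pw_succ, pw_succ, List.take_left] at e2
    rw [hl, List.take_left] at e2
    exact e2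
  obtain ⟨z, m, k, hxz, htz⟩ :=
    comm_root (x.length + t.length) x t le_rfl hcomm
  exact ⟨z, m, m + k, hxz, by rw [hxy, hxz, htz, ← pw_add]⟩

/-- Equal powers have a common root. -/
lemma pow_common (x y : List A) (a b : ℕ) (ha : 1 ≤ a) (hb : 1 ≤ b)
    (hw : pw a x = pw b y) :
    ∃ (z : List A) (m k : ℕ), x = pw m z ∧ y = pw k z := by
  rcases le_total x.length y.length with hle | hle
  · exact pow_common_aux x y a b ha hb hw hle
  · obtain ⟨z, m, k, h1, h2⟩ := pow_common_aux y x b a hb ha hw.symm hle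
    exact ⟨z, k, m, h2, h1⟩

/-- reduce `(u, z^m)` to `(u, z)` in at most one step. -/
lemma to_root (u z : List A) (m : ℕ) (hm : m ≠ 0) (hz : z ≠ []) :
    Relation.ReflGen GammaStep (u, pw m z) (u, z) := by
  rcases eq_or_lt_of_le (Nat.one_le_iff_ne_zero.mpr hm) with h1 | h1
  · rw [← h1, pw_one]
  · exact Relation.ReflGen.single (GammaStep.g2 u z m h1 hz)

/-- the g1/g2 critical pair joins in one step on each side. -/
lemma join12 (u v : List A) (a : A) (k : ℕ) (v₂ : List A) (hk : 1 < k) (hv₂ : v₂ ≠ [])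
    (heq : pw k v₂ = v ++ [a]) :
    ∃ s, Relation.ReflGen GammaStep (u, a :: v) s ∧
         Relation.ReflGen GammaStep (u ++ [a], v₂) s := by
  obtain ⟨v₂', b, rfl⟩ : ∃ l e, v₂ = l ++ [e] := by
    rcases List.eq_nil_or_concat v₂ with h | ⟨l, e, h⟩
    · exact absurd h hv₂
    · exact ⟨l, e, by simpa [List.concat_eq_append] using h⟩
  obtain ⟨k', rfl⟩ : ∃ k', k = k' + 1 := ⟨k - 1, by omega⟩
  have hsplit : pw (k' + 1) (v₂' ++ [b]) = (pw k' (v₂' ++ [b]) ++ v₂') ++ [b] := by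
    have e1 : pw (k' + 1) (v₂' ++ [b]) = pw k' (v₂' ++ [b]) ++ pw 1 (v₂' ++ [b]) :=
      pw_add k' 1 _
    rw [pw_one] at e1
    rw [e1, ← List.append_assoc]
  have hinj := List.append_inj' (hsplit.symm.trans heq) (by simp)
  have hba : a = b := by
    have := hinj.2
    simpa using this.symm
  subst hba
  have hv : pw k' (v₂' ++ [a]) ++ v₂' = v := hinj.1
  have hrot : a :: v = pw (k' + 1) (a :: v₂') := by
    have h := rot (k' + 1) [a] v₂'
    rw [heq] at h
    rw [List.singleton_append, List.singleton_append] at h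
    have h' : (a :: v) ++ [a] = pw (k' + 1) (a :: v₂') ++ [a] := by
      rw [List.cons_append]; exact h
    exact List.append_cancel_right h'
  refine ⟨(u, a :: v₂'), ?_, ?_⟩
  · rw [hrot]
    exact Relation.ReflGen.single (GammaStep.g2 u (a :: v₂') (k' + 1) hk (by simp))
  · exact Relation.ReflGen.single (GammaStep.g1 u v₂' a)

/-- strong local confluence. -/
lemma inv {p r : List A × List A} (h : GammaStep p r) :
    (∃ u v a, p = (u ++ [a], v ++ [a]) ∧ r = (u, a :: v)) ∨
    (∃ u v k, 1 < k ∧ v ≠ [] ∧ p = (u, pw k v) ∧ r = (u, v)) := by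
  cases h with
  | g1 u v a => exact Or.inl ⟨u, v, a, rfl, rfl⟩
  | g2 u v k hk hv => exact Or.inr ⟨u, v, k, hk, hv, rfl, rfl⟩

lemma locConf {p q r : List A × List A} (h1 : GammaStep p q) (h2 : GammaStep p r) :
    ∃ s, Relation.ReflGen GammaStep q s ∧ Relation.ReflGen GammaStep r s := by
  rcases inv h1 with ⟨u, v, a, hp, hq⟩ | ⟨u, v, k, hk, hv, hp, hq⟩ <;>
    rcases inv h2 with ⟨u', v', a', hp', hr⟩ | ⟨u', v', k', hk', hv', hp', hr⟩ <;>
      subst hq <;> subst hr <;> rw [hp'] at hp <;> injection hp with e1 e2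
  · -- g1 / g1
    obtain ⟨hu, ha⟩ := List.append_inj' e1 rfl
    obtain ⟨hvv, -⟩ := List.append_inj' e2 rfl
    have ha' : a' = a := by simpa using ha
    refine ⟨(u, a :: v), Relation.ReflGen.refl, ?_⟩
    rw [hu, hvv, ha']
  · -- g1 / g2
    obtain ⟨s, hs1, hs2⟩ := join12 u v a k' v' hk' hv' e2
    refine ⟨s, hs1, ?_⟩
    rw [e1]; exact hs2
  · -- g2 / g1
    obtain ⟨s, hs1, hs2⟩ := join12 u' v' a' k v hk hv e2.symm
    refine ⟨s, ?_, hs1⟩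
    rw [← e1]; exact hs2
  · -- g2 / g2
    obtain ⟨z, m, n, hvz, hvz'⟩ := pow_common v v' k k' (by omega) (by omega) e2.symm
    have hz : z ≠ [] := by
      rintro rfl
      exact hv (by rw [hvz, pw_nil])
    have hm : m ≠ 0 := by
      rintro rfl
      exact hv (by rw [hvz, pw_zero])
    have hn : n ≠ 0 := by
      rintro rfl
      exact hv' (by rw [hvz', pw_zero])
    refine ⟨(u, z), ?_, ?_⟩
    · rw [hvz]; exact to_root u z m hm hz
    · rw [e1, hvz']; exact to_root u z n hn hz

end GammaAux

/-- The rewrite relation →_γ is confluent and strongly normalising. -/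
theorem gammaStep_confluent_and_stronglyNormalising (A : Type) [Fintype A] :
    (∀ p q r : List A × List A,
        Relation.ReflTransGen GammaStep p q → Relation.ReflTransGen GammaStep p r →
        ∃ s, Relation.ReflTransGen GammaStep q s ∧ Relation.ReflTransGen GammaStep r s) ∧
    WellFounded (fun p q : List A × List A => GammaStep q p) := by
  constructor
  · intro p q r hpq hpr
    have := Relation.church_rosser
      (fun a b c hab hac => by
        obtain ⟨s, hs1, hs2⟩ := GammaAux.locConf hab hac
        exact ⟨s, hs1, hs2.to_reflTransGen⟩) hpq hpr
    exact this
  · have key : ∀ p q : List A × List A, GammaStep q p →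
        p.1.length + p.2.length < q.1.length + q.2.length := by
      intro p q h
      cases h with
      | g1 u v a => simp
      | g2 u v k hk hv =>
          have h1 : ((List.replicate k v).flatten).length = k * v.length :=
            GammaAux.pw_length k v
          have h2 : 0 < v.length := List.length_pos_iff.mpr hv
          have h3 : 2 * v.length ≤ k * v.length := Nat.mul_le_mul_right _ hk
          simp only [h1]
          omega
    have hsub : Subrelation (fun p q : List A × List A => GammaStep q p)
        (InvImage (· < ·) (fun p : List A × List A => p.1.length + p.2.length)) :=
      fun {p q} h => key p q h
    exact hsub.wf (InvImage.wf _ Nat.lt_wfRel.wf)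
end

section
/- Two lassos reduce to the same γ-normal form if and only if they represent the same ultimately periodic word. -/
/-- The infinite word `u v^ω` (as a function ℕ → Σ), for `v ≠ []`. -/
def uvOmega {A : Type} [Inhabited A] (u v : List A) : ℕ → A := fun n =>
  if h : n < u.length then u.get ⟨n, h⟩
  else v.getD ((n - u.length) % v.length) default

section Aux
set_option linter.unusedSectionVars false

variable {A : Type} [Inhabited A]

lemma uvOmega_lt {u v : List A} {n : ℕ} (h : n < u.length) : uvOmega u v n = u[n] := by
  simp [uvOmega, h]

lemma uvOmega_ge {u v : List A} {n : ℕ} (h : u.length ≤ n) :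
    uvOmega u v n = v.getD ((n - u.length) % v.length) default := by
  simp [uvOmega, Nat.not_lt.mpr h]

lemma flatten_replicate_getD (v : List A) (k i : ℕ) :
    (List.flatten (List.replicate k v)).getD i default =
      if i < k * v.length then v.getD (i % v.length) default else default := by
  induction k generalizing i with
  | zero => simp
  | succ k ih =>
    rw [List.replicate_succ, List.flatten_cons]
    rcases Nat.lt_or_ge i v.length with h | h
    · rw [List.getD_append _ _ _ _ h, Nat.mod_eq_of_lt h, if_pos]
      calc i < v.length := h
        _ ≤ (k + 1) * v.length := Nat.le_mul_of_pos_left _ k.succ_pos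
    · rw [List.getD_append_right _ _ _ _ h, ih]
      have e1 : (i - v.length) % v.length = i % v.length :=
        (Nat.mod_eq_sub_mod h).symm
      have e2 : (i - v.length < k * v.length) ↔ (i < (k + 1) * v.length) := by
        rw [Nat.sub_lt_iff_lt_add h, Nat.succ_mul, Nat.add_comm (k * v.length)]
      simp only [e1, e2]

lemma flatten_replicate_length (v : List A) (k : ℕ) :
    (List.flatten (List.replicate k v)).length = k * v.length := by
  simp [List.length_flatten, List.map_replicate, List.sum_replicate, smul_eq_mul]

lemma step_uvOmega {s s' : List A × List A} (h : GammaStep s s') :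
    uvOmega s.1 s.2 = uvOmega s'.1 s'.2 := by
  cases h with
  | g1 u v a =>
    funext n
    simp only
    rcases Nat.lt_trichotomy n u.length with h | h | h
    · rw [uvOmega_lt (by simp; omega), uvOmega_lt h]
      exact List.getElem_append_left h
    · subst h
      rw [uvOmega_lt (by simp), uvOmega_ge (le_refl _)]
      rw [List.getElem_concat_length rfl]
      simp
    · have hL : 0 < (v ++ [a]).length := by simp
      rw [uvOmega_ge (by simp; omega), uvOmega_ge (by omega)]
      have hlen1 : (u ++ [a]).length = u.length + 1 := by simp
      have hlen2 : (a :: v).length = (v ++ [a]).length := by simp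
      rw [hlen1, hlen2]
      set L := (v ++ [a]).length with hLdef
      set m := n - (u.length + 1) with hmdef
      have hm1 : n - u.length = m + 1 := by omega
      rw [hm1]
      set r := m % L with hrdef
      have hr : r < L := Nat.mod_lt _ hL
      have hm2 : (m + 1) % L = (r + 1) % L := by
        conv_lhs => rw [← Nat.div_add_mod m L]
        rw [← hrdef, Nat.add_assoc, Nat.mul_add_mod]
      rw [hm2]
      have hLv : L = v.length + 1 := by simp [hLdef]
      rcases Nat.lt_or_ge r v.length with hrv | hrv
      · have h1 : (v ++ [a]).getD r default = v[r] := by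
          rw [List.getD_eq_getElem _ _ (by omega)]
          exact List.getElem_append_left hrv
        have h2 : (r + 1) % L = r + 1 := Nat.mod_eq_of_lt (by omega)
        rw [h1, h2, List.getD_cons_succ, List.getD_eq_getElem _ _ hrv]
      · have hre : r = v.length := by omega
        have h1 : (v ++ [a]).getD r default = a := by
          rw [List.getD_eq_getElem _ _ (by omega)]
          exact List.getElem_concat_length hre _
        have h2 : (r + 1) % L = 0 := by
          rw [hre, ← hLv, Nat.mod_self]
        rw [h1, h2, List.getD_cons_zero]
  | g2 u v k hk hv =>
    funext n
    simp only
    rcases Nat.lt_or_ge n u.length with h | h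
    · rw [uvOmega_lt h, uvOmega_lt h]
    · rw [uvOmega_ge h, uvOmega_ge h]
      have hL : 0 < v.length := List.length_pos_iff.mpr hv
      rw [flatten_replicate_length]
      have hkL : 0 < k * v.length := Nat.mul_pos (by omega) hL
      rw [flatten_replicate_getD, if_pos (Nat.mod_lt _ hkL),
        Nat.mod_mod_of_dvd _ (dvd_mul_left v.length k)]

lemma rtg_uvOmega {s t : List A × List A} (h : Relation.ReflTransGen GammaStep s t) :
    uvOmega s.1 s.2 = uvOmega t.1 t.2 := by
  induction h with
  | refl => rfl
  | tail _ hstep ih => exact ih.trans (step_uvOmega hstep)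

lemma step_snd_ne {s s' : List A × List A} (h : GammaStep s s') : s'.2 ≠ [] := by
  cases h with
  | g1 => simp
  | g2 _ _ _ _ hv => exact hv

lemma rtg_snd_ne {u v : List A} {t : List A × List A}
    (h : Relation.ReflTransGen GammaStep (u, v) t) (hv : v ≠ []) : t.2 ≠ [] := by
  induction h with
  | refl => exact hv
  | tail _ hstep _ => exact step_snd_ne hstep

lemma per_mul {t : ℕ → A} {p : ℕ} (h : ∀ n, t (n + p) = t n) :
    ∀ c n, t (n + c * p) = t n := by
  intro c
  induction c with
  | zero => simp
  | succ c ih =>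
    intro n
    rw [Nat.succ_mul, ← Nat.add_assoc, h, ih]

lemma exists_bezout (p q : ℕ) (hp : 0 < p) (hq : 0 < q) :
    ∃ a b : ℕ, a * p = Nat.gcd p q + b * q := by
  have hB : ((Nat.gcd p q : ℕ) : ℤ) = p * Nat.gcdA p q + q * Nat.gcdB p q :=
    Nat.gcd_eq_gcd_ab p q
  set X := Nat.gcdA p q
  set Y := Nat.gcdB p q
  set M : ℤ := |X| + |Y| with hM
  have hM0 : 0 ≤ M := by positivity
  have hq1 : (1:ℤ) ≤ q := by exact_mod_cast hq
  have hp1 : (1:ℤ) ≤ p := by exact_mod_cast hp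
  have hMq : M ≤ M * q := le_mul_of_one_le_right hM0 hq1
  have hMp : M ≤ M * p := le_mul_of_one_le_right hM0 hp1
  have h1 : (0:ℤ) ≤ X + M * q := by
    have := neg_abs_le X
    have := abs_nonneg Y
    linarith
  have h2 : (0:ℤ) ≤ M * p - Y := by
    have := le_abs_self Y
    have := abs_nonneg X
    linarith
  refine ⟨(X + M * q).toNat, (M * p - Y).toNat, ?_⟩
  have key : (((X + M * q).toNat : ℤ)) * p = (Nat.gcd p q : ℤ) + ((M * p - Y).toNat : ℤ) * q := by
    rw [Int.toNat_of_nonneg h1, Int.toNat_of_nonneg h2, hB]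
    ring
  exact_mod_cast key

lemma per_gcd {t : ℕ → A} {p q : ℕ} (hp : 0 < p) (hq : 0 < q)
    (h1 : ∀ n, t (n + p) = t n) (h2 : ∀ n, t (n + q) = t n) :
    ∀ n, t (n + Nat.gcd p q) = t n := by
  obtain ⟨a, b, hab⟩ := exists_bezout p q hp hq
  intro n
  have e1 : t (n + Nat.gcd p q + b * q) = t (n + Nat.gcd p q) := per_mul h2 b _
  have e2 : t (n + a * p) = t n := per_mul h1 a n
  rw [← e1, ← e2]
  congr 1
  rw [Nat.add_assoc, ← hab]

/-- If `W` is normal (no γ-step applies) and `W.getD` is `g`-periodic below its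
length with `g ∣ W.length`, then `g = W.length`. -/
lemma prim_of_normal (x W : List A) (hW : W ≠ [])
    (h : ∀ s, ¬ GammaStep (x, W) s)
    (g : ℕ) (hg0 : 0 < g) (hdvd : g ∣ W.length)
    (hper : ∀ n < W.length, W.getD n default = W.getD (n % g) default) :
    g = W.length := by
  have hP : 0 < W.length := List.length_pos_iff.mpr hW
  have hgle : g ≤ W.length := Nat.le_of_dvd hP hdvd
  by_contra hne
  have hglt : g < W.length := lt_of_le_of_ne hgle hne
  have hmul : W.length / g * g = W.length := Nat.div_mul_cancel hdvd
  have hk : 1 < W.length / g := by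
    rcases Nat.lt_or_ge (W.length / g) 2 with hlt | hge
    · exfalso
      have : W.length / g * g ≤ 1 * g := Nat.mul_le_mul_right g (by omega)
      rw [hmul, one_mul] at this
      omega
    · omega
  set v0 := W.take g with hv0
  have hv0len : v0.length = g := by
    rw [hv0, List.length_take]
    omega
  have hv0ne : v0 ≠ [] := by
    rw [← List.length_pos_iff, hv0len]
    exact hg0
  have hv0get : ∀ j < g, v0.getD j default = W.getD j default := by
    intro j hj
    rw [List.getD_eq_getElem _ _ (by omega), List.getD_eq_getElem _ _ (by omega)]
    exact List.getElem_take
  have hrep : W = (List.replicate (W.length / g) v0).flatten := by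
    apply List.ext_getElem
    · rw [flatten_replicate_length, hv0len, hmul]
    · intro n hn1 hn2
      rw [← List.getD_eq_getElem _ default hn1, ← List.getD_eq_getElem _ default hn2,
        flatten_replicate_getD, hv0len, if_pos (by omega),
        hv0get _ (Nat.mod_lt _ hg0)]
      exact hper n hn1
  exact h (x, v0) (by rw [hrep]; exact GammaStep.g2 x v0 _ hk hv0ne)

lemma normal_unique_le (x w x' w' : List A) (hw : w ≠ []) (hw' : w' ≠ [])
    (h1 : ∀ s, ¬ GammaStep (x, w) s) (h2 : ∀ s, ¬ GammaStep (x', w') s)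
    (heq : uvOmega x w = uvOmega x' w') (hle : x.length ≤ x'.length) :
    (x, w) = (x', w') := by
  have hp : 0 < w.length := List.length_pos_iff.mpr hw
  have hq : 0 < w'.length := List.length_pos_iff.mpr hw'
  set d := x'.length - x.length with hd
  set t : ℕ → A := fun n => uvOmega x w (x.length + n) with ht_def
  have ht1 : ∀ n, t n = w.getD (n % w.length) default := by
    intro n
    simp only [ht_def]
    rw [uvOmega_ge (Nat.le_add_right _ _)]
    congr 2
    omega
  have ht2 : ∀ n, t (d + n) = w'.getD (n % w'.length) default := by
    intro n
    simp only [ht_def]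
    have e : x.length + (d + n) = x'.length + n := by omega
    rw [e, heq, uvOmega_ge (Nat.le_add_right _ _)]
    congr 2
    omega
  have hper_p : ∀ n, t (n + w.length) = t n := by
    intro n
    rw [ht1, ht1, Nat.add_mod_right]
  have hper_q : ∀ n, t (n + w'.length) = t n := by
    intro n
    obtain ⟨D, hdD, hperD⟩ : ∃ D, d ≤ D ∧ ∀ m, t (m + D) = t m :=
      ⟨d * w.length, Nat.le_mul_of_pos_right d hp, fun m => per_mul hper_p d m⟩
    have key : ∀ m, d ≤ m → t (m + w'.length) = t m := by
      intro m hm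
      have e1 : m + w'.length = d + (m - d + w'.length) := by omega
      have e2 : m = d + (m - d) := by omega
      rw [e1, ht2, Nat.add_mod_right, ← ht2, ← e2]
    calc t (n + w'.length) = t (n + w'.length + D) := (hperD _).symm
      _ = t (n + D + w'.length) := by congr 1; omega
      _ = t (n + D) := key _ (by omega)
      _ = t n := hperD n
  set g := Nat.gcd w.length w'.length with hg
  have hgp : g ∣ w.length := Nat.gcd_dvd_left _ _
  have hgq : g ∣ w'.length := Nat.gcd_dvd_right _ _
  have hg0 : 0 < g := Nat.gcd_pos_of_pos_left _ hp
  have hgle : g ≤ w.length := Nat.le_of_dvd hp hgp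
  have hgle' : g ≤ w'.length := Nat.le_of_dvd hq hgq
  have hper_g : ∀ n, t (n + g) = t n := per_gcd hp hq hper_p hper_q
  have hwrep : ∀ n < w.length, w.getD n default = w.getD (n % g) default := by
    intro n hn
    have e1 : w.getD n default = t n := by rw [ht1, Nat.mod_eq_of_lt hn]
    have e2 : w.getD (n % g) default = t (n % g) := by
      rw [ht1, Nat.mod_eq_of_lt (lt_of_lt_of_le (Nat.mod_lt _ hg0) hgle)]
    rw [e1, e2]
    have hsplit : n % g + n / g * g = n := Nat.mod_add_div' n g
    conv_lhs => rw [← hsplit]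
    exact per_mul hper_g (n / g) (n % g)
  have hwrep' : ∀ n < w'.length, w'.getD n default = w'.getD (n % g) default := by
    intro n hn
    have e1 : w'.getD n default = t (d + n) := by rw [ht2, Nat.mod_eq_of_lt hn]
    have e2 : w'.getD (n % g) default = t (d + n % g) := by
      rw [ht2, Nat.mod_eq_of_lt (lt_of_lt_of_le (Nat.mod_lt _ hg0) hgle')]
    rw [e1, e2]
    have hsplit : n % g + n / g * g = n := Nat.mod_add_div' n g
    have e3 : d + n = d + n % g + n / g * g := by
      rw [Nat.add_assoc, hsplit]
    rw [e3]
    exact per_mul hper_g (n / g) (d + n % g)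
  have hgP : g = w.length := prim_of_normal x w hw h1 g hg0 hgp hwrep
  have hgQ : g = w'.length := prim_of_normal x' w' hw' h2 g hg0 hgq hwrep'
  have hpq : w.length = w'.length := hgP ▸ hgQ
  have hd0 : d = 0 := by
    by_contra hd0
    have hdpos : 0 < d := Nat.pos_of_ne_zero hd0
    have hx'ne : x' ≠ [] := by
      rw [← List.length_pos_iff]
      omega
    have e1 : uvOmega x w (x'.length - 1) = x'.getLast hx'ne := by
      rw [heq, uvOmega_lt (by omega), List.getLast_eq_getElem]
    have e2 : uvOmega x w (x'.length - 1) = w'.getLast hw' := by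
      have a1 : x'.length - 1 = x.length + (d - 1) := by omega
      rw [a1]
      show t (d - 1) = _
      have a2 : t (d - 1) = t (d - 1 + w.length) := (hper_p _).symm
      have a3 : d - 1 + w.length = d + (w.length - 1) := by omega
      rw [a2, a3, ht2, Nat.mod_eq_of_lt (by omega),
        List.getD_eq_getElem _ _ (by omega), List.getLast_eq_getElem]
      congr 1
      omega
    have hlast : x'.getLast hx'ne = w'.getLast hw' := e1.symm.trans e2
    have hstep : GammaStep (x'.dropLast ++ [x'.getLast hx'ne],
        w'.dropLast ++ [x'.getLast hx'ne])
        (x'.dropLast, x'.getLast hx'ne :: w'.dropLast) := GammaStep.g1 _ _ _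
    rw [List.dropLast_append_getLast hx'ne, hlast,
      List.dropLast_append_getLast hw'] at hstep
    exact h2 _ hstep
  have hxx : x = x' := by
    apply List.ext_getElem (by omega)
    intro n hn1 hn2
    have := congrFun heq n
    rwa [uvOmega_lt hn1, uvOmega_lt hn2] at this
  have hww : w = w' := by
    apply List.ext_getElem hpq
    intro n hn1 hn2
    have b1 : w.getD n default = t n := by rw [ht1, Nat.mod_eq_of_lt hn1]
    have b2 : w'.getD n default = t (d + n) := by rw [ht2, Nat.mod_eq_of_lt hn2]
    rw [← List.getD_eq_getElem _ default hn1, ← List.getD_eq_getElem _ default hn2,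
      b1, b2, hd0, Nat.zero_add]
  rw [hxx, hww]

lemma normal_unique (x w x' w' : List A) (hw : w ≠ []) (hw' : w' ≠ [])
    (h1 : ∀ s, ¬ GammaStep (x, w) s) (h2 : ∀ s, ¬ GammaStep (x', w') s)
    (heq : uvOmega x w = uvOmega x' w') : (x, w) = (x', w') := by
  rcases le_total x.length x'.length with h | h
  · exact normal_unique_le x w x' w' hw hw' h1 h2 heq h
  · exact (normal_unique_le x' w' x w hw' hw h2 h1 heq.symm h).symm

end Aux

/-- Two lassos reduce to the same γ-normal form iff they represent the same
ultimately periodic word. -/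
theorem normalForm_eq_iff_same_word (A : Type) [Fintype A] [Inhabited A]
    (u v u' v' : List A) (hv : v ≠ []) (hv' : v' ≠ [])
    (n₁ n₂ : List A × List A)
    (h₁ : Relation.ReflTransGen GammaStep (u, v) n₁) (hn₁ : ∀ p, ¬ GammaStep n₁ p)
    (h₂ : Relation.ReflTransGen GammaStep (u', v') n₂) (hn₂ : ∀ p, ¬ GammaStep n₂ p) :
    n₁ = n₂ ↔ uvOmega u v = uvOmega u' v' := by
  have e1 : uvOmega u v = uvOmega n₁.1 n₁.2 := rtg_uvOmega h₁
  have e2 : uvOmega u' v' = uvOmega n₂.1 n₂.2 := rtg_uvOmega h₂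
  constructor
  · intro h
    rw [e1, e2, h]
  · intro hword
    have hne1 : n₁.2 ≠ [] := rtg_snd_ne h₁ hv
    have hne2 : n₂.2 ≠ [] := rtg_snd_ne h₂ hv'
    have hword' : uvOmega n₁.1 n₁.2 = uvOmega n₂.1 n₂.2 :=
      e1.symm.trans (hword.trans e2)
    have hres := normal_unique n₁.1 n₁.2 n₂.1 n₂.2 hne1 hne2
      (fun s => by rw [Prod.mk.eta]; exact hn₁ s)
      (fun s => by rw [Prod.mk.eta]; exact hn₂ s) hword'
    rw [← Prod.mk.eta (p := n₁), ← Prod.mk.eta (p := n₂)]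
    exact hres
end

section
/- Every rational lasso expression is provably equivalent in the theory LA of lasso algebras to a disjunctive form, i.e., a finite sum ∑_{i=1}^n t_i · r_i° with t_i, r_i rational expressions and ε ∉ ⟦r_i⟧. -/
/-- Rational expressions over alphabet `A`. -/
inductive RExp (A : Type) : Type
  | zero | one
  | char (a : A)
  | add (t r : RExp A)
  | mul (t r : RExp A)
  | star (t : RExp A)

/-- Language semantics of rational expressions. -/
def RExp.lang {A : Type} : RExp A → Language A
  | .zero => 0
  | .one => 1
  | .char a => {[a]}
  | .add t r => t.lang + r.lang
  | .mul t r => t.lang * r.lang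
  | .star t => KStar.kstar t.lang

/-- Empty word property, computed syntactically. -/
def RExp.eps {A : Type} : RExp A → Bool
  | .zero => false | .one => true | .char _ => false
  | .add t r => t.eps || r.eps
  | .mul t r => t.eps && r.eps
  | .star _ => true

/-- The Iverson bracket `[t ∈ N]` as a rational expression. -/
def RExp.epsExp {A : Type} (t : RExp A) : RExp A := if t.eps then .one else .zero

/-- The Brzozowski derivative. -/
def RExp.deriv {A : Type} [DecidableEq A] : RExp A → A → RExp A
  | .zero, _ => .zero
  | .one, _ => .zero
  | .char b, a => if b = a then .one else .zero
  | .add t r, a => .add (t.deriv a) (r.deriv a)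
  | .mul t r, a => .add (.mul (t.deriv a) r) (.mul t.epsExp (r.deriv a))
  | .star t, a => .mul (t.deriv a) (.star t)
/-- `U° = {(ε, u) | u ∈ U}`, as a lasso language (subset of Σ* × Σ⁺). -/
def circSet {A : Type} (U : Set (List A)) : Set (List A × List A) :=
  {p | p.1 = [] ∧ p.2 ∈ U ∧ p.2 ≠ []}

/-- `U·K = {(uv, w) | u ∈ U, (v, w) ∈ K}`. -/
def lprod {A : Type} (U : Set (List A)) (K : Set (List A × List A)) :
    Set (List A × List A) :=
  {p | ∃ u v w, u ∈ U ∧ (v, w) ∈ K ∧ p = (u ++ v, w)}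

/-- Rational lasso expressions: `ρ ::= 0 | t·ρ | ρ+ρ | r°`. -/
inductive LExp (A : Type) : Type
  | zero
  | scale (t : RExp A) (ρ : LExp A)
  | add (ρ σ : LExp A)
  | circ (r : RExp A)

/-- The side condition of the grammar: under each `(-)°` the expression
lacks the empty word property. -/
def LExp.WF {A : Type} : LExp A → Prop
  | .zero => True
  | .scale _ ρ => ρ.WF
  | .add ρ σ => ρ.WF ∧ σ.WF
  | .circ r => [] ∉ r.lang

/-- Lasso-language semantics of rational lasso expressions. -/
def LExp.lsem {A : Type} : LExp A → Set (List A × List A)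
  | .zero => ∅
  | .scale t ρ => lprod t.lang ρ.lsem
  | .add ρ σ => ρ.lsem ∪ σ.lsem
  | .circ r => circSet r.lang
/-- Provable equality in the two-sorted theory LA of lasso algebras, over a sound
base theory RA of rational expressions (substitution of RA-provably equivalent
rational expressions is modelled by equality of their languages). -/
inductive LAEq {A : Type} : LExp A → LExp A → Prop
  | refl (ρ) : LAEq ρ ρ
  | symm {ρ σ} : LAEq ρ σ → LAEq σ ρ
  | trans {ρ σ τ} : LAEq ρ σ → LAEq σ τ → LAEq ρ τ
  | scale_congr {t t' : RExp A} {ρ ρ'} : t.lang = t'.lang → LAEq ρ ρ' →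
      LAEq (.scale t ρ) (.scale t' ρ')
  | add_congr {ρ ρ' σ σ'} : LAEq ρ ρ' → LAEq σ σ' → LAEq (.add ρ σ) (.add ρ' σ')
  | circ_congr {r r' : RExp A} : r.lang = r'.lang → LAEq (.circ r) (.circ r')
  | one_scale (ρ) : LAEq (.scale .one ρ) ρ
  | zero_scale (ρ) : LAEq (.scale .zero ρ) .zero
  | add_scale (t r ρ) : LAEq (.scale (.add t r) ρ) (.add (.scale t ρ) (.scale r ρ))
  | scale_add (t ρ σ) : LAEq (.scale t (.add ρ σ)) (.add (.scale t ρ) (.scale t σ))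
  | scale_assoc (t r ρ) : LAEq (.scale t (.scale r ρ)) (.scale (.mul t r) ρ)
  | circ_zero : LAEq (.circ .zero) .zero
  | zero_add (ρ) : LAEq (.add .zero ρ) ρ
  | scale_zero (t) : LAEq (.scale t .zero) .zero
  | add_comm (ρ σ) : LAEq (.add ρ σ) (.add σ ρ)
  | add_assoc (ρ σ τ) : LAEq (.add (.add ρ σ) τ) (.add ρ (.add σ τ))
  | add_idem (ρ) : LAEq (.add ρ ρ) ρ
  | circ_add {t r : RExp A} : [] ∉ t.lang → [] ∉ r.lang →
      LAEq (.circ (.add t r)) (.add (.circ t) (.circ r))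

/-- Finite sums of rational lasso expressions. -/
def sumL {A : Type} (l : List (LExp A)) : LExp A := l.foldr .add .zero

lemma LAEq.add_zero {A : Type} (ρ : LExp A) : LAEq (.add ρ .zero) ρ :=
  (LAEq.add_comm _ _).trans (LAEq.zero_add _)

lemma sumL_append {A : Type} (l₁ l₂ : List (LExp A)) :
    LAEq (.add (sumL l₁) (sumL l₂)) (sumL (l₁ ++ l₂)) := by
  induction l₁ with
  | nil => exact LAEq.zero_add _
  | cons a l ih =>
      exact (LAEq.add_assoc _ _ _).trans (LAEq.add_congr (.refl _) ih)

lemma sumL_congr {A : Type} {l₁ l₂ : List (LExp A)}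
    (h : List.Forall₂ LAEq l₁ l₂) : LAEq (sumL l₁) (sumL l₂) := by
  induction h with
  | nil => exact .refl _
  | cons h _ ih => exact LAEq.add_congr h ih

lemma scale_sumL {A : Type} (t : RExp A) (l : List (LExp A)) :
    LAEq (.scale t (sumL l)) (sumL (l.map (.scale t))) := by
  induction l with
  | nil => exact LAEq.scale_zero _
  | cons a l ih =>
      exact (LAEq.scale_add _ _ _).trans (LAEq.add_congr (.refl _) ih)

/-- Every rational lasso expression is provably equivalent in LA to a
disjunctive form `∑ᵢ tᵢ · rᵢ°` with `ε ∉ ⟦rᵢ⟧`. -/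
theorem disjunctive_form (A : Type) [Fintype A] (ρ : LExp A) (hρ : ρ.WF) :
    ∃ l : List (RExp A × RExp A),
      (∀ p ∈ l, [] ∉ p.2.lang) ∧
      LAEq ρ (sumL (l.map fun p => .scale p.1 (.circ p.2))) := by
  induction ρ with
  | zero => exact ⟨[], by simp, .refl _⟩
  | scale t ρ ih =>
      obtain ⟨l, hl, he⟩ := ih hρ
      refine ⟨l.map fun p => (.mul t p.1, p.2), ?_, ?_⟩
      · intro p hp
        simp only [List.mem_map] at hp
        obtain ⟨q, hq, rfl⟩ := hp
        exact hl q hq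
      · refine ((LAEq.scale_congr rfl he).trans (scale_sumL t _)).trans ?_
        rw [List.map_map, List.map_map]
        exact sumL_congr (List.forall₂_map_right_iff.2 <|
          List.forall₂_map_left_iff.2 <| List.forall₂_same.2
            fun p _ => LAEq.scale_assoc _ _ _)
  | add ρ σ ihρ ihσ =>
      obtain ⟨l₁, hl₁, he₁⟩ := ihρ hρ.1
      obtain ⟨l₂, hl₂, he₂⟩ := ihσ hρ.2
      refine ⟨l₁ ++ l₂, ?_, ?_⟩
      · intro p hp
        rcases List.mem_append.1 hp with h | h
        exacts [hl₁ p h, hl₂ p h]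
      · rw [List.map_append]
        exact (LAEq.add_congr he₁ he₂).trans (sumL_append _ _)
  | circ r =>
      refine ⟨[(.one, r)], by simpa [LExp.WF] using hρ, ?_⟩
      exact .symm ((LAEq.add_zero _).trans (LAEq.one_scale _))
end

section
/- For every rational expression t over Σ, t is provably equal (in Kleene algebra) to [t ∈ N] + ∑_{a∈Σ} a·d(t,a), where d is the Brzozowski derivative and [t ∈ N] is 1 if ε ∈ ⟦t⟧ and 0 otherwise. Consequently ⟦t⟧ = ⟦[t∈N]⟧ ∪ ⋃_{a∈Σ} {a}·⟦d(t,a)⟧. -/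
lemma RExp.eps_iff {A : Type} (t : RExp A) : t.eps = true ↔ [] ∈ t.lang := by
  induction t with
  | zero => simp [RExp.eps, RExp.lang]
  | one => simp [RExp.eps, RExp.lang, Language.nil_mem_one]
  | char a =>
      simp only [RExp.eps, RExp.lang]
      constructor
      · intro h; simp at h
      · intro h; exact absurd (Set.mem_singleton_iff.mp h) (by simp)
  | add t r iht ihr =>
      simp [RExp.eps, RExp.lang, Language.mem_add, iht, ihr]
  | mul t r iht ihr =>
      simp only [RExp.eps, RExp.lang, Bool.and_eq_true, iht, ihr, Language.mem_mul]
      constructor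
      · rintro ⟨h1, h2⟩; exact ⟨[], h1, [], h2, rfl⟩
      · rintro ⟨u, hu, v, hv, huv⟩
        rcases List.append_eq_nil_iff.mp huv with ⟨rfl, rfl⟩
        exact ⟨hu, hv⟩
  | star t iht =>
      simp [RExp.eps, RExp.lang, Language.nil_mem_kstar]

lemma RExp.mem_deriv_lang {A : Type} [DecidableEq A] (t : RExp A) (a : A) (w : List A) :
    w ∈ (t.deriv a).lang ↔ a :: w ∈ t.lang := by
  induction t generalizing w with
  | zero => simp [RExp.deriv, RExp.lang]
  | one =>
      simp only [RExp.deriv, RExp.lang]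
      constructor
      · intro h; exact absurd h (Language.notMem_zero w)
      · intro h; simp [Language.mem_one] at h
  | char b =>
      by_cases hba : b = a
      · subst hba
        simp only [RExp.deriv, if_pos rfl, RExp.lang, Language.mem_one, Set.mem_singleton_iff]
        constructor
        · rintro rfl; rfl
        · intro h; injection h
      · simp only [RExp.deriv, if_neg hba, RExp.lang]
        constructor
        · intro h; exact absurd h (Language.notMem_zero w)
        · intro h
          replace h : a :: w = [b] := h
          injection h with h1 h2
          exact absurd h1.symm hba
  | add t r iht ihr =>
      simp [RExp.deriv, RExp.lang, Language.mem_add, iht, ihr]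
  | mul t r iht ihr =>
      simp only [RExp.deriv, RExp.lang, Language.mem_add, Language.mem_mul]
      constructor
      · rintro (⟨u, hu, v, hv, rfl⟩ | ⟨u, hu, v, hv, rfl⟩)
        · exact ⟨a :: u, (iht u).mp hu, v, hv, rfl⟩
        · have ht : t.eps = true := by
            by_contra h
            simp [RExp.epsExp, h, RExp.lang, Language.notMem_zero] at hu
          have hu0 : u = [] := by
            simp [RExp.epsExp, ht, RExp.lang, Language.mem_one] at hu; exact hu
          subst hu0
          exact ⟨[], (RExp.eps_iff t).mp ht, a :: v, (ihr v).mp hv, rfl⟩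
      · rintro ⟨u, hu, v, hv, huv⟩
        cases u with
        | nil =>
            right
            have ht := (RExp.eps_iff t).mpr hu
            refine ⟨[], by simp [RExp.epsExp, ht, RExp.lang, Language.mem_one], w, ?_, rfl⟩
            exact (ihr w).mpr (by simpa using huv ▸ hv)
        | cons b u' =>
            left
            injection huv with h1 h2
            subst h1
            exact ⟨u', (iht u').mpr hu, v, hv, h2⟩
  | star t iht =>
      simp only [RExp.deriv, RExp.lang, Language.mem_mul]
      constructor
      · rintro ⟨u, hu, v, hv, rfl⟩
        rw [Language.mem_kstar] at hv ⊢
        obtain ⟨L, rfl, hL⟩ := hv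
        exact ⟨(a :: u) :: L, rfl, by
          intro y hy
          rcases List.mem_cons.mp hy with rfl | hy
          · exact (iht u).mp hu
          · exact hL _ hy⟩
      · intro h
        rw [Language.mem_kstar_iff_exists_nonempty] at h
        obtain ⟨S, hS, hSm⟩ := h
        cases S with
        | nil => simp at hS
        | cons s S' =>
            obtain ⟨hs, hsne⟩ := hSm s (by simp)
            cases s with
            | nil => exact absurd rfl hsne
            | cons b s' =>
                simp only [List.flatten_cons] at hS
                injection hS with h1 h2
                subst h1
                refine ⟨s', (iht s').mpr hs, S'.flatten, ?_, h2.symm⟩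
                exact Language.join_mem_kstar (fun y hy => (hSm y (by simp [hy])).1)

/-- Fundamental theorem of Brzozowski derivatives, at the level of languages:
`⟦t⟧ = ⟦[t∈N]⟧ ∪ ⋃_{a∈Σ} {a}·⟦d(t,a)⟧`. -/
theorem fundamental_theorem_rexp (A : Type) [Fintype A] [DecidableEq A] (t : RExp A) :
    t.lang = (RExp.epsExp t).lang ⊔ ⨆ a : A, ({[a]} : Language A) * (t.deriv a).lang := by
  have hsup : ∀ x y : Language A, x ⊔ y = x + y := fun _ _ => rfl
  rw [hsup]
  ext w
  simp only [Language.mem_add, Language.mem_iSup, Language.mem_mul]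
  cases w with
  | nil =>
      constructor
      · intro h
        left
        have : t.eps = true := (RExp.eps_iff t).mpr h
        simp [RExp.epsExp, this, RExp.lang, Language.mem_one]
      · rintro (h | ⟨a, u, hu, v, hv, huv⟩)
        · have : t.eps = true := by
            by_contra he
            simp [RExp.epsExp, he, RExp.lang, Language.notMem_zero] at h
          exact (RExp.eps_iff t).mp this
        · have hu' : u = [a] := hu
          subst hu'
          simp at huv
  | cons a w =>
      constructor
      · intro h
        right
        exact ⟨a, [a], rfl, w, (RExp.mem_deriv_lang t a w).mpr h, rfl⟩
      · rintro (h | ⟨b, u, hu, v, hv, huv⟩)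
        · exfalso
          by_cases he : t.eps
          · simp [RExp.epsExp, he, RExp.lang, Language.mem_one] at h
          · simp [RExp.epsExp, he, RExp.lang, Language.notMem_zero] at h
        · have hu' : u = [b] := hu
          subst hu'
          rw [List.cons_append, List.nil_append] at huv
          injection huv with h1 h2
          subst h1; rw [h2] at hv
          exact (RExp.mem_deriv_lang t b w).mp hv
end

section
/- A lasso language is regular (accepted by a finite lasso automaton) if and only if it is rational (obtained from rational languages via the operations U°, U·K and union). -/
/-- Rational lasso languages: the least class containing `U°` for `U` rational,
closed under `U·K` for `U` rational, and under binary union. -/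
inductive IsRatLasso {A : Type} : Set (List A × List A) → Prop
  | circ (t : RExp A) : IsRatLasso (circSet t.lang)
  | scale (t : RExp A) {K} : IsRatLasso K → IsRatLasso (lprod t.lang K)
  | union {K L} : IsRatLasso K → IsRatLasso L → IsRatLasso (K ∪ L)

namespace KleeneAux
variable {A : Type}
def Run {Q : Type} (st : Q → A → Q → Prop) : Q → List A → Q → Prop
  | q, [], q' => q = q'
  | q, a :: w, q' => ∃ r, st q a r ∧ Run st r w q'

lemma run_nil {Q : Type} (st : Q → A → Q → Prop) (q q' : Q) :
    Run st q [] q' ↔ q = q' := Iff.rfl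

lemma run_cons {Q : Type} (st : Q → A → Q → Prop) (q q' : Q) (a : A) (w : List A) :
    Run st q (a :: w) q' ↔ ∃ r, st q a r ∧ Run st r w q' := Iff.rfl

lemma run_append {Q : Type} (st : Q → A → Q → Prop) (q q' : Q) (u v : List A) :
    Run st q (u ++ v) q' ↔ ∃ m, Run st q u m ∧ Run st m v q' := by
  induction u generalizing q with
  | nil => simp [Run]
  | cons a u ih =>
    simp only [List.cons_append, run_cons, ih]
    constructor
    · rintro ⟨r, h1, m, h2, h3⟩; exact ⟨m, ⟨r, h1, h2⟩, h3⟩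
    · rintro ⟨m, ⟨r, h1, h2⟩, h3⟩; exact ⟨r, h1, m, h2, h3⟩

def sumStep {Q1 Q2 : Type} (s1 : Q1 → A → Q1 → Prop) (s2 : Q2 → A → Q2 → Prop)
    (cr : Q1 → A → Q2 → Prop) : (Q1 ⊕ Q2) → A → (Q1 ⊕ Q2) → Prop
  | .inl q, a, .inl r => s1 q a r
  | .inl q, a, .inr r => cr q a r
  | .inr q, a, .inr r => s2 q a r
  | .inr _, _, .inl _ => False

lemma run_inr {Q1 Q2 : Type} {s1 : Q1 → A → Q1 → Prop} {s2 : Q2 → A → Q2 → Prop}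
    {cr : Q1 → A → Q2 → Prop} {q : Q2} {w : List A} {x : Q1 ⊕ Q2} :
    Run (sumStep s1 s2 cr) (.inr q) w x ↔ ∃ q', x = .inr q' ∧ Run s2 q w q' := by
  induction w generalizing q with
  | nil =>
    simp only [run_nil]
    constructor
    · rintro rfl; exact ⟨q, rfl, rfl⟩
    · rintro ⟨q', rfl, rfl⟩; rfl
  | cons a w ih =>
    simp only [run_cons]
    constructor
    · rintro ⟨r, h1, h2⟩
      cases r with
      | inl r => exact absurd h1 (by simp [sumStep])
      | inr r =>
        rcases ih.1 h2 with ⟨q', rfl, h3⟩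
        exact ⟨q', rfl, r, h1, h3⟩
    · rintro ⟨q', rfl, r, h1, h2⟩
      exact ⟨.inr r, h1, ih.2 ⟨q', rfl, h2⟩⟩

lemma run_inl {Q1 Q2 : Type} {s1 : Q1 → A → Q1 → Prop} {s2 : Q2 → A → Q2 → Prop}
    {cr : Q1 → A → Q2 → Prop} {q : Q1} {w : List A} {x : Q1 ⊕ Q2} :
    Run (sumStep s1 s2 cr) (.inl q) w x ↔
      (∃ q', x = .inl q' ∧ Run s1 q w q') ∨
      (∃ u a v q1 r q2, w = u ++ a :: v ∧ Run s1 q u q1 ∧ cr q1 a r ∧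
        Run s2 r v q2 ∧ x = .inr q2) := by
  induction w generalizing q with
  | nil =>
    simp only [run_nil]
    constructor
    · rintro rfl; exact Or.inl ⟨q, rfl, rfl⟩
    · rintro (⟨q', rfl, rfl⟩ | ⟨u, a, v, q1, r, q2, h, _⟩)
      · rfl
      · exact absurd h (by simp)
  | cons a w ih =>
    simp only [run_cons]
    constructor
    · rintro ⟨r, h1, h2⟩
      cases r with
      | inl r =>
        rcases ih.1 h2 with ⟨q', rfl, h3⟩ | ⟨u, b, v, q1, r', q2, rfl, hu, hc, hv, rfl⟩
        · exact Or.inl ⟨q', rfl, r, h1, h3⟩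
        · exact Or.inr ⟨a :: u, b, v, q1, r', q2, rfl, ⟨r, h1, hu⟩, hc, hv, rfl⟩
      | inr r =>
        rcases run_inr.1 h2 with ⟨q', rfl, h3⟩
        exact Or.inr ⟨[], a, w, q, r, q', rfl, rfl, h1, h3, rfl⟩
    · rintro (⟨q', rfl, r, h1, h2⟩ | ⟨u, b, v, q1, r', q2, he, hu, hc, hv, rfl⟩)
      · exact ⟨.inl r, h1, ih.2 (Or.inl ⟨q', rfl, h2⟩)⟩
      · cases u with
        | nil =>
          simp only [List.nil_append, List.cons.injEq] at he
          obtain ⟨rfl, rfl⟩ := he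
          cases hu
          exact ⟨.inr r', hc, run_inr.2 ⟨q2, rfl, hv⟩⟩
        | cons c u =>
          simp only [List.cons_append, List.cons.injEq] at he
          obtain ⟨rfl, rfl⟩ := he
          obtain ⟨m, hm1, hm2⟩ := hu
          exact ⟨.inl m, hm1, ih.2 (Or.inr ⟨u, b, v, q1, r', q2, rfl, hm2, hc, hv, rfl⟩)⟩

/- star step -/
def starStep {Q : Type} (st : Q → A → Q → Prop) (start acc : Q → Prop) :
    Option Q → A → Option Q → Prop
  | none, a, some r => ∃ s, start s ∧ st s a r
  | some q, a, some r => st q a r ∨ (acc q ∧ ∃ s, start s ∧ st s a r)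
  | _, _, none => False

lemma run_some_of_run {Q : Type} {st : Q → A → Q → Prop} {start acc : Q → Prop}
    {q q' : Q} {w : List A} (h : Run st q w q') :
    Run (starStep st start acc) (some q) w (some q') := by
  induction w generalizing q with
  | nil => cases h; rfl
  | cons a w ih =>
    obtain ⟨r, h1, h2⟩ := h
    exact ⟨some r, Or.inl h1, ih h2⟩

/-- Core decomposition for the star automaton. -/
lemma star_decomp {Q : Type} {st : Q → A → Q → Prop} {start acc : Q → Prop}
    {L : Language A} (hL : ∀ w, w ∈ L ↔ ∃ q q', start q ∧ acc q' ∧ Run st q w q') :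
    ∀ w (q : Q) (y : Option Q), Run (starStep st start acc) (some q) w y →
      (y = none ∨ ∃ p, acc p ∧ y = some p) →
      ∃ u v q1, w = u ++ v ∧ Run st q u q1 ∧ acc q1 ∧ v ∈ KStar.kstar L := by
  intro w
  induction w with
  | nil =>
    rintro q y rfl hy
    rcases hy with h | ⟨p, hp, h⟩
    · cases h
    · cases h
      exact ⟨[], [], q, rfl, rfl, hp, Language.nil_mem_kstar L⟩
  | cons a w ih =>
    rintro q y ⟨r, h1, h2⟩ hy
    cases r with
    | none => exact h1.elim
    | some r =>
      rcases h1 with h1 | ⟨hq, s, hs, hstep⟩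
      · obtain ⟨u, v, q1, rfl, hr, hq1, hv⟩ := ih r y h2 hy
        exact ⟨a :: u, v, q1, rfl, ⟨r, h1, hr⟩, hq1, hv⟩
      · obtain ⟨u, v, q1, rfl, hr, hq1, hv⟩ := ih r y h2 hy
        refine ⟨[], (a :: u) ++ v, q, rfl, rfl, hq, ?_⟩
        have hau : a :: u ∈ L := (hL _).2 ⟨s, q1, hs, hq1, ⟨r, hstep, hr⟩⟩
        rcases Language.mem_kstar.1 hv with ⟨S, rfl, hS⟩
        refine Language.mem_kstar.2 ⟨(a :: u) :: S, rfl, ?_⟩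
        intro y hy'
        rcases List.mem_cons.1 hy' with rfl | h''
        · exact hau
        · exact hS _ h''

lemma star_piece {Q : Type} {st : Q → A → Q → Prop} {start acc : Q → Prop}
    {u : List A} (hu : u ≠ []) (h : ∃ q q', start q ∧ acc q' ∧ Run st q u q')
    (x : Option Q) (hx : x = none ∨ ∃ p, acc p ∧ x = some p) :
    ∃ q', acc q' ∧ Run (starStep st start acc) x u (some q') := by
  obtain ⟨q, q', hq, hq', hrun⟩ := h
  cases u with
  | nil => exact absurd rfl hu
  | cons a u =>
    obtain ⟨r, h1, h2⟩ := hrun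
    refine ⟨q', hq', some r, ?_, run_some_of_run h2⟩
    rcases hx with rfl | ⟨p, hp, rfl⟩
    · exact ⟨q, hq, h1⟩
    · exact Or.inr ⟨hp, q, hq, h1⟩

theorem exists_nfa (t : RExp A) :
    ∃ (Q : Type) (_ : Fintype Q) (start acc : Q → Prop) (st : Q → A → Q → Prop),
      ∀ w, w ∈ t.lang ↔ ∃ q q', start q ∧ acc q' ∧ Run st q w q' := by
  induction t with
  | zero =>
    refine ⟨Unit, inferInstance, fun _ => False, fun _ => False, fun _ _ _ => False,
      fun w => ?_⟩
    constructor
    · intro h; exact h.elim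
    · rintro ⟨q, q', hq, _, _⟩; exact hq.elim
  | one =>
    refine ⟨Unit, inferInstance, fun _ => True, fun _ => True, fun _ _ _ => False,
      fun w => ?_⟩
    rw [show (RExp.one : RExp A).lang = 1 from rfl, Language.mem_one]
    constructor
    · rintro rfl; exact ⟨(), (), trivial, trivial, rfl⟩
    · rintro ⟨q, q', -, -, h⟩
      cases w with
      | nil => rfl
      | cons a w => obtain ⟨r, hr, -⟩ := h; exact hr.elim
  | char a =>
    refine ⟨Bool, inferInstance, fun q => q = false, fun q => q = true,
      fun q b r => q = false ∧ r = true ∧ b = a, fun w => ?_⟩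
    rw [show (RExp.char a).lang = {[a]} from rfl, show w ∈ ({[a]} : Language A) ↔ w = [a] from Iff.rfl]
    constructor
    · rintro rfl
      exact ⟨false, true, rfl, rfl, true, ⟨rfl, rfl, rfl⟩, rfl⟩
    · rintro ⟨q, q', rfl, rfl, h⟩
      cases w with
      | nil => exact absurd h (by simp [Run])
      | cons b w =>
        obtain ⟨r, ⟨-, rfl, rfl⟩, h2⟩ := h
        cases w with
        | nil => rfl
        | cons c w => obtain ⟨r2, ⟨hc, -, -⟩, -⟩ := h2; exact absurd hc (by simp)
  | add t r iht ihr =>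
    obtain ⟨Q1, F1, start1, acc1, s1, h1⟩ := iht
    obtain ⟨Q2, F2, start2, acc2, s2, h2⟩ := ihr
    refine ⟨Q1 ⊕ Q2, inferInstance, Sum.elim start1 start2, Sum.elim acc1 acc2,
      sumStep s1 s2 (fun _ _ _ => False), fun w => ?_⟩
    rw [show (RExp.add t r).lang = t.lang + r.lang from rfl, Language.mem_add, h1, h2]
    constructor
    · rintro (⟨q, q', hq, hq', hrun⟩ | ⟨q, q', hq, hq', hrun⟩)
      · exact ⟨.inl q, .inl q', hq, hq', run_inl.2 (Or.inl ⟨q', rfl, hrun⟩)⟩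
      · exact ⟨.inr q, .inr q', hq, hq', run_inr.2 ⟨q', rfl, hrun⟩⟩
    · rintro ⟨x, y, hx, hy, hrun⟩
      cases x with
      | inl q =>
        rcases run_inl.1 hrun with ⟨q', rfl, hr⟩ | ⟨u, b, v, q1, rr, q2, rfl, -, hc, -, -⟩
        · exact Or.inl ⟨q, q', hx, hy, hr⟩
        · exact hc.elim
      | inr q =>
        rcases run_inr.1 hrun with ⟨q', rfl, hr⟩
        exact Or.inr ⟨q, q', hx, hy, hr⟩
  | mul t r iht ihr =>
    obtain ⟨Q1, F1, start1, acc1, s1, h1⟩ := iht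
    obtain ⟨Q2, F2, start2, acc2, s2, h2⟩ := ihr
    refine ⟨Q1 ⊕ Q2, inferInstance,
      Sum.elim start1 (fun _ => False),
      Sum.elim (fun q => acc1 q ∧ ∃ s, start2 s ∧ acc2 s) acc2,
      sumStep s1 s2 (fun q a x => acc1 q ∧ ∃ s, start2 s ∧ s2 s a x), fun w => ?_⟩
    rw [show (RExp.mul t r).lang = t.lang * r.lang from rfl, Language.mem_mul]
    constructor
    · rintro ⟨u, hu, v, hv, rfl⟩
      obtain ⟨q, q', hq, hq', hru⟩ := (h1 u).1 hu
      obtain ⟨s, s', hs, hs', hrv⟩ := (h2 v).1 hv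
      cases v with
      | nil =>
        cases hrv
        exact ⟨.inl q, .inl q', hq, ⟨hq', s, hs, hs'⟩,
          by rw [List.append_nil]; exact run_inl.2 (Or.inl ⟨q', rfl, hru⟩)⟩
      | cons a v' =>
        obtain ⟨rr, hstep, hrest⟩ := hrv
        exact ⟨.inl q, .inr s', hq, hs',
          run_inl.2 (Or.inr ⟨u, a, v', q', rr, s', rfl, hru, ⟨hq', s, hs, hstep⟩, hrest, rfl⟩)⟩
    · rintro ⟨x, y, hx, hy, hrun⟩
      cases x with
      | inr q => exact hx.elim
      | inl q =>
        rcases run_inl.1 hrun with ⟨q', rfl, hr⟩ |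
          ⟨u, b, v, q1, rr, q2, rfl, hu, ⟨hq1, s, hs, hstep⟩, hv, rfl⟩
        · obtain ⟨hq', s, hs, hs'⟩ := hy
          exact ⟨w, (h1 w).2 ⟨q, q', hx, hq', hr⟩, [],
            (h2 []).2 ⟨s, s, hs, hs', rfl⟩, List.append_nil w⟩
        · exact ⟨u, (h1 u).2 ⟨q, q1, hx, hq1, hu⟩, b :: v,
            (h2 (b :: v)).2 ⟨s, q2, hs, hy, rr, hstep, hv⟩, rfl⟩
  | star t iht =>
    obtain ⟨Q1, F1, start1, acc1, s1, h1⟩ := iht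
    refine ⟨Option Q1, inferInstance, fun x => x = none,
      fun x => x = none ∨ ∃ p, acc1 p ∧ x = some p,
      starStep s1 start1 acc1, fun w => ?_⟩
    rw [show (RExp.star t).lang = KStar.kstar t.lang from rfl]
    constructor
    · intro hw
      rcases Language.mem_kstar_iff_exists_nonempty.1 hw with ⟨S, rfl, hS⟩
      suffices h : ∀ S : List (List A), (∀ y ∈ S, y ∈ t.lang ∧ y ≠ []) →
          ∀ x : Option Q1, (x = none ∨ ∃ p, acc1 p ∧ x = some p) →
          ∃ y, (y = none ∨ ∃ p, acc1 p ∧ y = some p) ∧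
            Run (starStep s1 start1 acc1) x S.flatten y by
        obtain ⟨y, hy, hr⟩ := h S hS none (Or.inl rfl)
        exact ⟨none, y, rfl, hy, hr⟩
      intro S
      induction S with
      | nil => intro _ x hx; exact ⟨x, hx, rfl⟩
      | cons u S ih =>
        intro hS x hx
        obtain ⟨hu, hune⟩ := hS u (List.mem_cons_self)
        obtain ⟨q', hq', hru⟩ := star_piece hune ((h1 u).1 hu) x hx
        obtain ⟨y, hy, hrS⟩ := ih (fun y hy => hS y (List.mem_cons_of_mem _ hy))
          (some q') (Or.inr ⟨q', hq', rfl⟩)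
        exact ⟨y, hy, by rw [List.flatten_cons]; exact (run_append _ _ _ _ _).2 ⟨some q', hru, hrS⟩⟩
    · rintro ⟨x, y, rfl, hy, hrun⟩
      cases w with
      | nil => exact Language.nil_mem_kstar _
      | cons a w' =>
        obtain ⟨r, hstep, hrest⟩ := hrun
        cases r with
        | none => exact hstep.elim
        | some r =>
          obtain ⟨s, hs, hsr⟩ := hstep
          obtain ⟨u, v, q1, rfl, hru, hq1, hv⟩ := star_decomp h1 w' r y hrest hy
          rcases Language.mem_kstar.1 hv with ⟨S, rfl, hS⟩
          refine Language.mem_kstar.2 ⟨(a :: u) :: S, rfl, ?_⟩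
          intro z hz
          rcases List.mem_cons.1 hz with rfl | hz'
          · exact (h1 _).2 ⟨s, q1, hs, hq1, r, hsr, hru⟩
          · exact hS _ hz'

/-- Subset construction: deterministic step on sets of states. -/
def dstep {Q : Type} (st : Q → A → Q → Prop) (S : Set Q) (a : A) : Set Q :=
  {r | ∃ q ∈ S, st q a r}

lemma foldl_dstep {Q : Type} (st : Q → A → Q → Prop) :
    ∀ (w : List A) (S : Set Q),
      List.foldl (dstep st) S w = {q' | ∃ q ∈ S, Run st q w q'} := by
  intro w
  induction w with
  | nil => intro S; ext q; simp [Run]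
  | cons a w ih =>
    intro S
    rw [List.foldl_cons, ih]
    ext q'
    simp only [Set.mem_setOf_eq, dstep, run_cons]
    constructor
    · rintro ⟨q, ⟨p, hp, hs⟩, hr⟩; exact ⟨p, hp, q, hs, hr⟩
    · rintro ⟨p, hp, q, hs, hr⟩; exact ⟨q, ⟨p, hp, hs⟩, hr⟩

/-- Kleene: every rational expression is recognized by a finite DFA. -/
theorem exists_dfa (t : RExp A) :
    ∃ (Q : Type) (_ : Fintype Q) (q0 : Q) (d : Q → A → Q) (acc : Set Q),
      ∀ w, w ∈ t.lang ↔ List.foldl d q0 w ∈ acc := by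
  obtain ⟨Q, hF, start, acc, st, h⟩ := exists_nfa t
  refine ⟨Set Q, @Set.fintype Q hF, {q | start q}, dstep st, {S | ∃ q ∈ S, acc q},
    fun w => ?_⟩
  rw [h, foldl_dstep]
  constructor
  · rintro ⟨q, q', hq, hq', hr⟩; exact ⟨q', ⟨q, hq, hr⟩, hq'⟩
  · rintro ⟨q', ⟨q, hq, hr⟩, hq'⟩; exact ⟨q, q', hq, hq', hr⟩
/-! ### DFA to regex: McNaughton–Yamada -/

/-- Words taking `p` to `q` such that every state visited strictly inside lies in `l`. -/
def RL {Q : Type} (d : Q → A → Q) (l : List Q) (p q : Q) : Language A :=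
  {w | List.foldl d p w = q ∧
    ∀ u v, u ≠ [] → v ≠ [] → w = u ++ v → List.foldl d p u ∈ l}

lemma nil_mem_RL {Q : Type} (d : Q → A → Q) (l : List Q) (p : Q) :
    [] ∈ RL d l p p := by
  refine ⟨rfl, fun u v hu hv h => ?_⟩
  rcases List.append_eq_nil_iff.1 h.symm with ⟨rfl, -⟩
  exact absurd rfl hu

lemma RL_mono {Q : Type} {d : Q → A → Q} {l l' : List Q} (h : ∀ q ∈ l, q ∈ l')
    (p q : Q) : ∀ w, w ∈ RL d l p q → w ∈ RL d l' p q :=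
  fun _ ⟨h1, h2⟩ => ⟨h1, fun u v hu hv he => h _ (h2 u v hu hv he)⟩

lemma RL_comp {Q : Type} {d : Q → A → Q} {l : List Q} {p x q : Q} (hx : x ∈ l)
    {w1 w2 : List A} (h1 : w1 ∈ RL d l p x) (h2 : w2 ∈ RL d l x q) :
    w1 ++ w2 ∈ RL d l p q := by
  obtain ⟨e1, hs1⟩ := h1
  obtain ⟨e2, hs2⟩ := h2
  refine ⟨by rw [List.foldl_append, e1, e2], fun u v hu hv he => ?_⟩
  rcases List.append_eq_append_iff.1 he with ⟨a', rfl, ha'⟩ | ⟨c', hc', rfl⟩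
  · -- u = w1 ++ a', v ++ ... : w2 = a' ++ v ... check orientation below
    rcases eq_or_ne a' [] with rfl | hne
    · rw [List.append_nil, e1]; exact hx
    · rw [List.foldl_append, e1]
      exact hs2 a' v hne hv ha'
  · rcases eq_or_ne c' [] with rfl | hne
    · rw [List.append_nil] at hc'
      rw [← hc', e1]; exact hx
    · exact hs1 u c' hu hne hc'

lemma flatten_mem_RL {Q : Type} {d : Q → A → Q} {l : List Q} {x : Q} (hx : x ∈ l) :
    ∀ S : List (List A), (∀ y ∈ S, y ∈ RL d l x x) → S.flatten ∈ RL d l x x := by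
  intro S
  induction S with
  | nil => intro _; exact nil_mem_RL d l x
  | cons u S ih =>
    intro h
    rw [List.flatten_cons]
    exact RL_comp hx (h u (List.mem_cons_self))
      (ih fun y hy => h y (List.mem_cons_of_mem _ hy))

/-- Loop decomposition for runs from `x` allowed to revisit `x`. -/
lemma RL_loop {Q : Type} {d : Q → A → Q} {l : List Q} {x q : Q} :
    ∀ (n : ℕ) (w : List A), w.length ≤ n → w ∈ RL d (x :: l) x q →
      w ∈ KStar.kstar (RL d l x x) * RL d l x q := by
  classical
  intro n
  induction n with
  | zero =>
    intro w hw h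
    rw [List.length_eq_zero_iff.1 (Nat.le_zero.1 hw)] at h ⊢
    refine Language.mem_mul.2 ⟨[], Language.nil_mem_kstar _, [], ?_, rfl⟩
    obtain ⟨h1, -⟩ := h
    exact ⟨h1, fun u v hu hv he => absurd (List.append_eq_nil_iff.1 he.symm).1 hu⟩
  | succ n ih =>
    intro w hw h
    obtain ⟨h1, h2⟩ := h
    by_cases hall : ∀ u v, u ≠ [] → v ≠ [] → w = u ++ v → List.foldl d x u ∈ l
    · exact Language.mem_mul.2 ⟨[], Language.nil_mem_kstar _, w, ⟨h1, hall⟩, rfl⟩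
    · push_neg at hall
      obtain ⟨u, v, hu, hv, he, hnl⟩ := hall
      have hP : ∃ k, 0 < k ∧ k < w.length ∧ List.foldl d x (w.take k) = x := by
        refine ⟨u.length, List.length_pos_iff.2 hu, ?_, ?_⟩
        · rw [he, List.length_append]
          have := List.length_pos_iff.2 hv; omega
        · rw [he, List.take_left]
          rcases List.mem_cons.1 (h2 u v hu hv he) with h' | h'
          · exact h'
          · exact absurd h' hnl
      obtain ⟨hk0, hklt, hkx⟩ := Nat.find_spec hP
      set k := Nat.find hP with hkdef
      set u1 := w.take k with hu1
      set v1 := w.drop k with hv1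
      have hwe : w = u1 ++ v1 := (List.take_append_drop k w).symm
      have hu1ne : u1 ≠ [] := by
        rw [hu1, ← List.length_pos_iff, List.length_take]; omega
      have hv1ne : v1 ≠ [] := by
        rw [hv1, ← List.length_pos_iff, List.length_drop]; omega
      have hu1RL : u1 ∈ RL d l x x := by
        refine ⟨hkx, fun a b ha hb hab => ?_⟩
        have hprefix : w = a ++ (b ++ v1) := by rw [hwe, hab, List.append_assoc]
        have hmem := h2 a (b ++ v1) ha (by simp [hb]) hprefix
        rcases List.mem_cons.1 hmem with h' | h'
        · exfalso
          have halen : a.length < k := by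
            have : u1.length = k := by rw [hu1, List.length_take]; omega
            have : a.length < u1.length := by
              rw [hab, List.length_append]
              have := List.length_pos_iff.2 hb; omega
            omega
          refine Nat.find_min hP halen ⟨List.length_pos_iff.2 ha, ?_, ?_⟩
          · omega
          · rwa [hprefix, List.take_left]
        · exact h'
      have hv1RL : v1 ∈ RL d (x :: l) x q := by
        constructor
        · have := h1
          rw [hwe, List.foldl_append, hkx] at this
          exact this
        · intro a b ha hb hab
          have : List.foldl d x (u1 ++ a) = List.foldl d x a := by
            rw [List.foldl_append, hkx]
          rw [← this]
          exact h2 (u1 ++ a) b (by simp [hu1ne]) hb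
            (by rw [hwe, hab, List.append_assoc])
      have hlen : v1.length ≤ n := by
        rw [hv1, List.length_drop]; omega
      obtain ⟨s, hs, r, hr, hsr⟩ := Language.mem_mul.1 (ih v1 hlen hv1RL)
      refine Language.mem_mul.2 ⟨u1 ++ s, ?_, r, hr, by rw [hwe, ← hsr, List.append_assoc]⟩
      rcases Language.mem_kstar.1 hs with ⟨S, rfl, hS⟩
      exact Language.mem_kstar.2 ⟨u1 :: S, rfl, by
        intro y hy
        rcases List.mem_cons.1 hy with rfl | hy'
        · exact hu1RL
        · exact hS _ hy'⟩

lemma RL_cons {Q : Type} (d : Q → A → Q) (x : Q) (l : List Q) (p q : Q) :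
    RL d (x :: l) p q =
      RL d l p q + RL d l p x * (KStar.kstar (RL d l x x) * RL d l x q) := by
  classical
  ext w
  constructor
  · rintro ⟨h1, h2⟩
    by_cases hall : ∀ u v, u ≠ [] → v ≠ [] → w = u ++ v → List.foldl d p u ∈ l
    · exact Or.inl ⟨h1, hall⟩
    · push_neg at hall
      obtain ⟨u, v, hu, hv, he, hnl⟩ := hall
      have hP : ∃ k, 0 < k ∧ k < w.length ∧ List.foldl d p (w.take k) = x := by
        refine ⟨u.length, List.length_pos_iff.2 hu, ?_, ?_⟩
        · rw [he, List.length_append]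
          have := List.length_pos_iff.2 hv; omega
        · rw [he, List.take_left]
          rcases List.mem_cons.1 (h2 u v hu hv he) with h' | h'
          · exact h'
          · exact absurd h' hnl
      obtain ⟨hk0, hklt, hkx⟩ := Nat.find_spec hP
      set k := Nat.find hP with hkdef
      set u1 := w.take k with hu1
      set v1 := w.drop k with hv1
      have hwe : w = u1 ++ v1 := (List.take_append_drop k w).symm
      have hu1ne : u1 ≠ [] := by
        rw [hu1, ← List.length_pos_iff, List.length_take]; omega
      have hv1ne : v1 ≠ [] := by
        rw [hv1, ← List.length_pos_iff, List.length_drop]; omega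
      have hu1RL : u1 ∈ RL d l p x := by
        refine ⟨hkx, fun a b ha hb hab => ?_⟩
        have hprefix : w = a ++ (b ++ v1) := by rw [hwe, hab, List.append_assoc]
        have hmem := h2 a (b ++ v1) ha (by simp [hb]) hprefix
        rcases List.mem_cons.1 hmem with h' | h'
        · exfalso
          have halen : a.length < k := by
            have : u1.length = k := by rw [hu1, List.length_take]; omega
            have : a.length < u1.length := by
              rw [hab, List.length_append]
              have := List.length_pos_iff.2 hb; omega
            omega
          refine Nat.find_min hP halen ⟨List.length_pos_iff.2 ha, ?_, ?_⟩
          · omega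
          · rwa [hprefix, List.take_left]
        · exact h'
      have hv1RL : v1 ∈ RL d (x :: l) x q := by
        constructor
        · have := h1
          rw [hwe, List.foldl_append, hkx] at this
          exact this
        · intro a b ha hb hab
          have hfold : List.foldl d p (u1 ++ a) = List.foldl d x a := by
            rw [List.foldl_append, hkx]
          rw [← hfold]
          exact h2 (u1 ++ a) b (by simp [hu1ne]) hb
            (by rw [hwe, hab, List.append_assoc])
      exact Or.inr (by
        rw [hwe]
        exact Language.append_mem_mul hu1RL (RL_loop v1.length v1 le_rfl hv1RL))
  · rintro (h | h)
    · exact RL_mono (fun r hr => List.mem_cons_of_mem x hr) p q w h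
    · obtain ⟨w1, hw1, w2, hw2, rfl⟩ := Language.mem_mul.1 h
      obtain ⟨s, hs, r, hr, rfl⟩ := Language.mem_mul.1 hw2
      have hxm : x ∈ x :: l := List.mem_cons_self
      have hmono : ∀ (a b : Q) w', w' ∈ RL d l a b → w' ∈ RL d (x :: l) a b :=
        fun a b => RL_mono (fun r' hr' => List.mem_cons_of_mem x hr') a b
      refine RL_comp hxm (hmono p x w1 hw1) (RL_comp hxm ?_ (hmono x q r hr))
      rcases Language.mem_kstar.1 hs with ⟨S, rfl, hS⟩
      exact flatten_mem_RL hxm S fun y hy => hmono x x y (hS y hy)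
def sumExp {ι : Type} (f : ι → RExp A) : List ι → RExp A
  | [] => .zero
  | i :: l => .add (f i) (sumExp f l)

lemma mem_sumExp {ι : Type} (f : ι → RExp A) (l : List ι) (w : List A) :
    w ∈ (sumExp f l).lang ↔ ∃ i ∈ l, w ∈ (f i).lang := by
  induction l with
  | nil =>
    simp only [sumExp, List.not_mem_nil, false_and, exists_false, iff_false]
    exact fun h => h.elim
  | cons i l ih =>
    simp only [sumExp, RExp.lang, Language.mem_add, ih, List.mem_cons]
    constructor
    · rintro (h | ⟨j, hj, h⟩)
      · exact ⟨i, Or.inl rfl, h⟩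
      · exact ⟨j, Or.inr hj, h⟩
    · rintro ⟨j, (rfl | hj), h⟩
      · exact Or.inl h
      · exact Or.inr ⟨j, hj, h⟩

lemma mem_RL_nil {Q : Type} (d : Q → A → Q) (p q : Q) (w : List A) :
    w ∈ RL d [] p q ↔ (w = [] ∧ p = q) ∨ ∃ a, w = [a] ∧ d p a = q := by
  constructor
  · rintro ⟨h1, h2⟩
    match w with
    | [] => exact Or.inl ⟨rfl, h1⟩
    | [a] => exact Or.inr ⟨a, rfl, h1⟩
    | a :: b :: w' =>
      exact absurd (h2 [a] (b :: w') (by simp) (by simp) rfl) List.not_mem_nil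
  · rintro (⟨rfl, rfl⟩ | ⟨a, rfl, ha⟩)
    · exact nil_mem_RL d [] p
    · refine ⟨ha, fun u v hu hv he => ?_⟩
      exfalso
      cases u with
      | nil => exact hu rfl
      | cons c u' =>
        simp only [List.cons_append, List.cons.injEq] at he
        exact hv (List.append_eq_nil_iff.1 he.2.symm).2

lemma exists_RL [Fintype A] {Q : Type} (d : Q → A → Q) (l : List Q) :
    ∀ p q : Q, ∃ t : RExp A, t.lang = RL d l p q := by
  classical
  induction l with
  | nil =>
    intro p q
    refine ⟨.add (if p = q then .one else .zero)
      (sumExp (fun a => if d p a = q then .char a else .zero) Finset.univ.toList), ?_⟩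
    apply Language.ext
    intro w
    rw [show (RExp.add (if p = q then RExp.one else RExp.zero)
        (sumExp (fun a => if d p a = q then RExp.char a else RExp.zero)
          Finset.univ.toList) : RExp A).lang = _ + _ from rfl,
      Language.mem_add, mem_sumExp, mem_RL_nil]
    constructor
    · rintro (h | ⟨a, -, h⟩)
      · by_cases hpq : p = q
        · rw [if_pos hpq] at h
          exact Or.inl ⟨(Language.mem_one w).1 h, hpq⟩
        · rw [if_neg hpq] at h
          exact h.elim
      · by_cases hda : d p a = q
        · rw [if_pos hda] at h
          exact Or.inr ⟨a, h, hda⟩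
        · rw [if_neg hda] at h
          exact h.elim
    · rintro (⟨rfl, rfl⟩ | ⟨a, rfl, ha⟩)
      · exact Or.inl (by rw [if_pos rfl]; exact Language.nil_mem_one)
      · exact Or.inr ⟨a, Finset.mem_toList.2 (Finset.mem_univ a),
          by rw [if_pos ha]; rfl⟩
  | cons x l ih =>
    intro p q
    obtain ⟨t1, h1⟩ := ih p q
    obtain ⟨t2, h2⟩ := ih p x
    obtain ⟨t3, h3⟩ := ih x x
    obtain ⟨t4, h4⟩ := ih x q
    exact ⟨.add t1 (.mul t2 (.mul (.star t3) t4)),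
      by rw [RL_cons, ← h1, ← h2, ← h3, ← h4]; rfl⟩

theorem exists_regex_foldl [Fintype A] {Q : Type} [Fintype Q] (d : Q → A → Q) (q0 : Q)
    (acc : Set Q) : ∃ t : RExp A, ∀ w, w ∈ t.lang ↔ List.foldl d q0 w ∈ acc := by
  classical
  choose f hf using exists_RL d (Finset.univ.toList (α := Q))
  have hRLuniv : ∀ p q w, w ∈ RL d Finset.univ.toList p q ↔ List.foldl d p w = q := by
    intro p q w
    constructor
    · exact fun h => h.1
    · exact fun h => ⟨h, fun u v _ _ _ => Finset.mem_toList.2 (Finset.mem_univ _)⟩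
  refine ⟨sumExp (fun q => if q ∈ acc then f q0 q else .zero) Finset.univ.toList,
    fun w => ?_⟩
  rw [mem_sumExp]
  constructor
  · rintro ⟨q, -, h⟩
    by_cases hq : q ∈ acc
    · rw [if_pos hq, hf q0 q] at h
      rw [(hRLuniv q0 q w).1 h]
      exact hq
    · rw [if_neg hq] at h
      exact h.elim
  · intro h
    refine ⟨List.foldl d q0 w, Finset.mem_toList.2 (Finset.mem_univ _), ?_⟩
    rw [if_pos h, hf q0 _]
    exact (hRLuniv q0 _ w).2 rfl
/-! ### Helpers for lasso automata -/

lemma foldl_const_false : ∀ (l : List A) , List.foldl (fun (_ : Bool) (_ : A) => false) false l = false := by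
  intro l; induction l with
  | nil => rfl
  | cons a l ih => exact ih

lemma foldl_opt_none {Q : Type} (d : Q → A → Q) (w : List A) :
    List.foldl (fun y a => Option.map (fun r => d r a) y) (none : Option Q) w = none := by
  induction w with
  | nil => rfl
  | cons a w ih => exact ih

lemma foldl_opt_some {Q : Type} (d : Q → A → Q) :
    ∀ (w : List A) (q : Q),
      List.foldl (fun y a => Option.map (fun r => d r a) y) (some q) w
        = some (List.foldl d q w) := by
  intro w
  induction w with
  | nil => intro q; rfl
  | cons a w ih => intro q; exact ih (d q a)

lemma foldl_pair {X1 X2 : Type} (f : X1 → A → X1) (g : X2 → A → X2) :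
    ∀ (w : List A) (x : X1) (y : X2),
      List.foldl (fun p a => (f p.1 a, g p.2 a)) (x, y) w
        = (List.foldl f x w, List.foldl g y w) := by
  intro w
  induction w with
  | nil => intro x y; rfl
  | cons a w ih => intro x y; exact ih (f x a) (g y a)

lemma foldl_setimg {Y : Type} (d3 : Y → A → Y) :
    ∀ (w : List A) (T : Set Y),
      List.foldl (fun T a => {y | ∃ y' ∈ T, y = d3 y' a}) T w
        = {y | ∃ y' ∈ T, y = List.foldl d3 y' w} := by
  intro w
  induction w with
  | nil => intro T; ext y; simp
  | cons a w ih =>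
    intro T
    rw [List.foldl_cons, ih]
    ext y
    simp only [Set.mem_setOf_eq, List.foldl_cons]
    constructor
    · rintro ⟨y', ⟨y'', hy'', rfl⟩, rfl⟩; exact ⟨y'', hy'', rfl⟩
    · rintro ⟨y'', hy'', rfl⟩; exact ⟨d3 y'' a, ⟨y'', hy'', rfl⟩, rfl⟩

lemma foldl_scale {Q X : Type} (d : Q → A → Q) (q0 : Q) (acc : Set Q)
    (d1 : X → A → X) (x0 : X) :
    ∀ u : List A,
      List.foldl (fun (s : Q × Set X) a =>
        (d s.1 a, {x | (∃ x' ∈ s.2, x = d1 x' a) ∨ (x = x0 ∧ d s.1 a ∈ acc)}))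
        (q0, {x | x = x0 ∧ q0 ∈ acc}) u
      = (List.foldl d q0 u,
         {x | ∃ s v, u = s ++ v ∧ List.foldl d q0 s ∈ acc ∧ x = List.foldl d1 x0 v}) := by
  intro u
  induction u using List.reverseRecOn with
  | nil =>
    refine congrArg₂ Prod.mk rfl ?_
    ext x
    simp only [Set.mem_setOf_eq]
    constructor
    · rintro ⟨rfl, h⟩; exact ⟨[], [], rfl, h, rfl⟩
    · rintro ⟨s, v, he, hs, rfl⟩
      obtain ⟨rfl, rfl⟩ := List.append_eq_nil_iff.1 he.symm
      exact ⟨rfl, hs⟩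
  | append_singleton u a ih =>
    rw [List.foldl_append, ih, List.foldl_cons, List.foldl_nil]
    refine congrArg₂ Prod.mk (by rw [List.foldl_append]; rfl) ?_
    ext x
    simp only [Set.mem_setOf_eq]
    constructor
    · rintro (⟨x', ⟨s, v, rfl, hs, rfl⟩, rfl⟩ | ⟨rfl, h⟩)
      · exact ⟨s, v ++ [a], by rw [List.append_assoc], hs,
          by rw [List.foldl_append]; rfl⟩
      · exact ⟨u ++ [a], [], by rw [List.append_nil], by rwa [List.foldl_append], rfl⟩
    · rintro ⟨s, v, he, hs, rfl⟩
      rcases v.eq_nil_or_concat with rfl | ⟨v', b, rfl⟩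
      · rw [List.append_nil] at he
        subst he
        exact Or.inr ⟨rfl, by rwa [List.foldl_append] at hs⟩
      · simp only [List.concat_eq_append] at he ⊢
        rw [← List.append_assoc] at he
        obtain ⟨rfl, hb⟩ := List.append_inj' he (by simp)
        obtain rfl : a = b := by simpa using hb
        exact Or.inl ⟨List.foldl d1 x0 v', ⟨s, v', rfl, hs, rfl⟩,
          by rw [List.foldl_append]; rfl⟩
lemma ratlasso_empty : IsRatLasso (∅ : Set (List A × List A)) := by
  have h : (∅ : Set (List A × List A)) = circSet (RExp.zero : RExp A).lang := by
    ext p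
    constructor
    · exact fun h => h.elim
    · rintro ⟨-, h2, -⟩; exact h2.elim
  rw [h]; exact IsRatLasso.circ _

lemma ratlasso_list_union {ι : Type} (f : ι → Set (List A × List A)) :
    ∀ l : List ι, (∀ i ∈ l, IsRatLasso (f i)) →
      IsRatLasso {p | ∃ i ∈ l, p ∈ f i} := by
  intro l
  induction l with
  | nil =>
    intro _
    have h : {p : List A × List A | ∃ i ∈ ([] : List ι), p ∈ f i} = ∅ := by
      ext p; simp
    rw [h]; exact ratlasso_empty
  | cons i l ih =>
    intro h
    have he : {p | ∃ j ∈ i :: l, p ∈ f j} = f i ∪ {p | ∃ j ∈ l, p ∈ f j} := by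
      ext p
      simp only [List.mem_cons, Set.mem_union, Set.mem_setOf_eq]
      constructor
      · rintro ⟨j, (rfl | hj), hp⟩
        exacts [Or.inl hp, Or.inr ⟨j, hj, hp⟩]
      · rintro (hp | ⟨j, hj, hp⟩)
        exacts [⟨i, Or.inl rfl, hp⟩, ⟨j, Or.inr hj, hp⟩]
    rw [he]
    exact IsRatLasso.union (h i (List.mem_cons_self))
      (ih fun j hj => h j (List.mem_cons_of_mem i hj))

end KleeneAux

open KleeneAux

/-- Kleene theorem for lasso languages: a lasso language is regular (accepted by
a finite lasso automaton) iff it is rational. -/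
theorem kleene_theorem_lasso (A : Type) [Fintype A] (L : Set (List A × List A)) :
    (∃ (X Y : Type) (_ : Fintype X) (_ : Fintype Y) (x0 : X)
        (δ1 : X → A → X) (δ2 : X → A → Y) (δ3 : Y → A → Y) (F : Set Y),
      L = {p : List A × List A |
        ∃ a w, p.2 = a :: w ∧ List.foldl δ3 (δ2 (List.foldl δ1 x0 p.1) a) w ∈ F}) ↔
    IsRatLasso L := by
  constructor
  · rintro ⟨X, Y, hX, hY, x0, d1, d2, d3, F, hLdef⟩
    haveI := hX; haveI := hY
    choose tx htx using fun x : X => exists_regex_foldl d1 x0 ({x} : Set X)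
    choose rx hrx using fun (x : X) (a : A) => exists_regex_foldl d3 (d2 x a) F
    have hm : ∀ (x : X) (w : List A),
        w ∈ (sumExp (fun a => RExp.mul (RExp.char a) (rx x a)) Finset.univ.toList).lang ↔
          ∃ a w', w = a :: w' ∧ List.foldl d3 (d2 x a) w' ∈ F := by
      intro x w
      rw [mem_sumExp]
      constructor
      · rintro ⟨a, -, h⟩
        obtain ⟨b, hb, c, hc, rfl⟩ := Language.mem_mul.1 h
        replace hb : b = [a] := hb
        subst hb
        exact ⟨a, c, rfl, (hrx x a c).1 hc⟩
      · rintro ⟨a, w', rfl, hF⟩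
        exact ⟨a, Finset.mem_toList.2 (Finset.mem_univ a),
          Language.mem_mul.2 ⟨[a], rfl, w', (hrx x a w').2 hF, rfl⟩⟩
    have hLe : L = {p | ∃ x ∈ (Finset.univ.toList : List X),
        p ∈ lprod (tx x).lang
          (circSet (sumExp (fun a => RExp.mul (RExp.char a) (rx x a))
            Finset.univ.toList).lang)} := by
      rw [hLdef]
      ext ⟨p1, p2⟩
      simp only [Set.mem_setOf_eq]
      constructor
      · rintro ⟨a, w, hp2, hF⟩
        refine ⟨List.foldl d1 x0 p1, Finset.mem_toList.2 (Finset.mem_univ _),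
          p1, [], p2, (htx (List.foldl d1 x0 p1) p1).2 (Set.mem_singleton _), ⟨rfl, ?_, by rw [hp2]; simp⟩,
          by rw [List.append_nil]⟩
        exact (hm _ p2).2 ⟨a, w, hp2, hF⟩
      · rintro ⟨x, -, u, v, w', hu, hc, he⟩
        obtain ⟨hv, hw, -⟩ := hc
        replace hv : v = [] := hv
        subst hv
        simp only [Prod.mk.injEq, List.append_nil] at he
        obtain ⟨he1, he2⟩ := he
        have hu' : List.foldl d1 x0 u = x := Set.mem_singleton_iff.1 ((htx x u).1 hu)
        obtain ⟨a, w, hw1, hw2⟩ := (hm x w').1 hw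
        exact ⟨a, w, by rw [he2]; exact hw1, by rw [he1, hu']; exact hw2⟩
    rw [hLe]
    exact ratlasso_list_union _ _
      (fun x _ => IsRatLasso.scale (tx x) (IsRatLasso.circ _))
  · intro h
    induction h with
    | circ t =>
      obtain ⟨Q, hQ, q0, d, acc, hdfa⟩ := exists_dfa t
      haveI := hQ
      refine ⟨Bool, Option Q, inferInstance, inferInstance, true,
        fun _ _ => false,
        fun x a => cond x (some (d q0 a)) none,
        fun y a => Option.map (fun r => d r a) y,
        {y | ∃ q, y = some q ∧ q ∈ acc}, ?_⟩
      ext ⟨p1, p2⟩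
      simp only [Set.mem_setOf_eq]
      constructor
      · rintro ⟨hp1, h2, hne⟩
        replace hp1 : p1 = [] := hp1
        subst hp1
        cases p2 with
        | nil => exact absurd rfl (by exact hne)
        | cons a w =>
          refine ⟨a, w, rfl, ?_⟩
          rw [List.foldl_nil, cond_true, foldl_opt_some]
          refine ⟨_, rfl, ?_⟩
          have := (hdfa (a :: w)).1 h2
          rwa [List.foldl_cons] at this
      · rintro ⟨a, w, hp2, hacc⟩
        cases p1 with
        | nil =>
          rw [List.foldl_nil, cond_true, foldl_opt_some] at hacc
          obtain ⟨q, hq, hmem⟩ := hacc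
          obtain rfl := Option.some.inj hq
          refine ⟨rfl, ?_, by rw [hp2]; exact List.cons_ne_nil a w⟩
          show p2 ∈ t.lang
          rw [hp2]
          exact (hdfa (a :: w)).2 (by rw [List.foldl_cons]; exact hmem)
        | cons c p1' =>
          exfalso
          rw [List.foldl_cons] at hacc
          rw [show List.foldl (fun (_ : Bool) (_ : A) => false) false p1' = false from
            foldl_const_false p1', cond_false, foldl_opt_none] at hacc
          obtain ⟨q, hq, -⟩ := hacc
          cases hq
    | @scale t K' hK' ih =>
      obtain ⟨X, Y, hX, hY, x0, d1, d2, d3, F, hKdef⟩ := ih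
      obtain ⟨Q, hQ, q0, d, acc, hdfa⟩ := exists_dfa t
      haveI := hX; haveI := hY; haveI := hQ
      refine ⟨Q × Set X, Set Y, inferInstance, inferInstance,
        (q0, {x | x = x0 ∧ q0 ∈ acc}),
        (fun s a => (d s.1 a, {x | (∃ x' ∈ s.2, x = d1 x' a) ∨ (x = x0 ∧ d s.1 a ∈ acc)})),
        (fun s a => {y | ∃ x ∈ s.2, y = d2 x a}),
        (fun T a => {y | ∃ y' ∈ T, y = d3 y' a}),
        {T | ∃ y ∈ T, y ∈ F}, ?_⟩
      ext ⟨p1, p2⟩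
      simp only [Set.mem_setOf_eq]
      constructor
      · rintro ⟨u, v, w', hu, hvw, he⟩
        simp only [Prod.mk.injEq] at he
        obtain ⟨rfl, rfl⟩ := he
        rw [hKdef] at hvw
        obtain ⟨a, w, hp2, hy⟩ := hvw
        refine ⟨a, w, hp2, ?_⟩
        rw [foldl_scale d q0 acc d1 x0 (u ++ v), foldl_setimg d3 w]
        exact ⟨List.foldl d3 (d2 (List.foldl d1 x0 v) a) w,
          ⟨d2 (List.foldl d1 x0 v) a,
            ⟨List.foldl d1 x0 v, ⟨u, v, rfl, (hdfa u).1 hu, rfl⟩, rfl⟩, rfl⟩, hy⟩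
      · rintro ⟨a, w, hp2, hacc⟩
        rw [foldl_scale d q0 acc d1 x0 p1, foldl_setimg d3 w] at hacc
        obtain ⟨y, ⟨y', ⟨x, hx, rfl⟩, rfl⟩, hyF⟩ := hacc
        have hx' : ∃ s v, p1 = s ++ v ∧ List.foldl d q0 s ∈ acc ∧
            x = List.foldl d1 x0 v := hx
        obtain ⟨s, v, hsplit, hs, rfl⟩ := hx'
        refine ⟨s, v, p2, (hdfa s).2 hs, ?_, by rw [hsplit]⟩
        rw [hKdef]
        exact ⟨a, w, hp2, hyF⟩
    | union hK hL ihK ihL =>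
      obtain ⟨X1, Y1, hX1, hY1, x1, d11, d21, d31, F1, h1⟩ := ihK
      obtain ⟨X2, Y2, hX2, hY2, x2, d12, d22, d32, F2, h2⟩ := ihL
      haveI := hX1; haveI := hY1; haveI := hX2; haveI := hY2
      refine ⟨X1 × X2, Y1 × Y2, inferInstance, inferInstance, (x1, x2),
        (fun p a => (d11 p.1 a, d12 p.2 a)),
        (fun p a => (d21 p.1 a, d22 p.2 a)),
        (fun p a => (d31 p.1 a, d32 p.2 a)),
        {y | y.1 ∈ F1 ∨ y.2 ∈ F2}, ?_⟩
      ext ⟨p1, p2⟩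
      rw [Set.mem_union, h1, h2]
      simp only [Set.mem_setOf_eq]
      constructor
      · rintro (⟨a, w, hp2, hF⟩ | ⟨a, w, hp2, hF⟩)
        · refine ⟨a, w, hp2, ?_⟩
          rw [foldl_pair d11 d12 p1 x1 x2, foldl_pair d31 d32 w]
          exact Or.inl hF
        · refine ⟨a, w, hp2, ?_⟩
          rw [foldl_pair d11 d12 p1 x1 x2, foldl_pair d31 d32 w]
          exact Or.inr hF
      · rintro ⟨a, w, hp2, hF⟩
        rw [foldl_pair d11 d12 p1 x1 x2, foldl_pair d31 d32 w] at hF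
        rcases hF with hF | hF
        · exact Or.inl ⟨a, w, hp2, hF⟩
        · exact Or.inr ⟨a, w, hp2, hF⟩
end

section
/- Let U, V ⊆ Σ* be languages with ε ∉ V, U·V* = U and V⁺ = V. Then for every ultimately periodic word u v^ω ∈ U·V^ω there exist u' ∈ U and v' ∈ V with u v^ω = u' v'^ω. -/
/-- `l` is a prefix of the infinite word `w`. -/
def IsWordPrefix {A : Type} (l : List A) (w : ℕ → A) : Prop :=
  ∀ i (h : i < l.length), l.get ⟨i, h⟩ = w i

/-- `w` is the infinite concatenation `u · f 0 · f 1 · ⋯`. -/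
def OmegaCat {A : Type} (u : List A) (f : ℕ → List A) (w : ℕ → A) : Prop :=
  ∀ n, IsWordPrefix (u ++ ((List.range n).map f).flatten) w

/-- Lemma 5 of Calbrix–Nivat–Podelski: if `ε ∉ V`, `U·V* = U` and `V⁺ = V`,
then every ultimately periodic word `u v^ω ∈ U·V^ω` can be written as
`u' v'^ω` with `u' ∈ U` and `v' ∈ V`. -/
theorem calbrix_lemma (A : Type) [Fintype A] [Inhabited A]
    (U V : Language A) (hV : [] ∉ V)
    (hUV : U * KStar.kstar V = U) (hVplus : V * KStar.kstar V = V)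
    (u v : List A) (hv : v ≠ [])
    (hmem : ∃ (u0 : List A) (f : ℕ → List A),
      u0 ∈ U ∧ (∀ i, f i ∈ V) ∧ OmegaCat u0 f (uvOmega u v)) :
    ∃ u' ∈ U, ∃ v' ∈ V, uvOmega u v = uvOmega u' v' := by
  classical
  obtain ⟨u0, f, hu0, hf, hcat⟩ := hmem
  have hp0 : 0 < v.length := List.length_pos_iff.2 hv
  set L : ℕ → List A := fun n => u0 ++ ((List.range n).map f).flatten with hLdef
  set s : ℕ → ℕ := fun n => (L n).length with hsdef
  have hfpos : ∀ i, 0 < (f i).length :=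
    fun i => List.length_pos_iff.2 (fun h => hV (h ▸ hf i))
  have hssucc : ∀ n, s (n + 1) = s n + (f n).length := by
    intro n
    simp [hsdef, hLdef, List.range_succ, Nat.add_assoc]
  have hsmono : StrictMono s :=
    strictMono_nat_of_lt_succ (fun n => by rw [hssucc]; have := hfpos n; omega)
  have hsle : ∀ n, n ≤ s n := fun n => hsmono.le_apply
  -- a general membership fact
  have hstar : ∀ (k : ℕ) (g : ℕ → List A), (∀ i, g i ∈ V) →
      ((List.range k).map g).flatten ∈ KStar.kstar V := by
    intro k g hg
    rw [Language.mem_kstar]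
    refine ⟨(List.range k).map g, rfl, ?_⟩
    intro y hy
    rcases List.mem_map.1 hy with ⟨i, _, rfl⟩
    exact hg i
  -- pigeonhole to find two block boundaries ≥ |u| with the same residue mod |v|
  obtain ⟨n, m, hnm, hun, hres⟩ :
      ∃ n m : ℕ, n < m ∧ u.length ≤ n ∧
        (s n - u.length) % v.length = (s m - u.length) % v.length := by
    obtain ⟨a, b, hab, hg⟩ := Fintype.exists_ne_map_eq_of_card_lt
      (fun j : Fin (v.length + 1) =>
        (⟨(s (u.length + j) - u.length) % v.length, Nat.mod_lt _ hp0⟩ : Fin v.length))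
      (by simp)
    have hval : (s (u.length + a) - u.length) % v.length
        = (s (u.length + b) - u.length) % v.length := congrArg Fin.val hg
    rcases lt_or_gt_of_ne hab with h | h
    · exact ⟨u.length + a, u.length + b, by omega, Nat.le_add_right _ _, hval⟩
    · exact ⟨u.length + b, u.length + a, by omega, Nat.le_add_right _ _, hval.symm⟩
  have husn : u.length ≤ s n := le_trans hun (hsle n)
  have hsnm : s n < s m := hsmono hnm
  -- decompose L m = L n ++ D
  set D : List A := ((List.range (m - n)).map (fun i => f (n + i))).flatten with hDdef
  have hLm : L m = L n ++ D := by
    have hr : List.range m = List.range n ++ (List.range (m - n)).map (fun i => n + i) := by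
      rw [← List.range_add]; congr 1; omega
    simp [hLdef, hDdef, hr, List.map_map, Function.comp_def]
  have hDlen : D.length = s m - s n := by
    have : s m = s n + D.length := by
      simp only [hsdef, hLm, List.length_append]
    omega
  have hDpos : 0 < D.length := by omega
  -- membership of u' = L n in U
  have hu' : L n ∈ U := by
    rw [← hUV, Language.mem_mul]
    exact ⟨u0, hu0, _, hstar n f hf, rfl⟩
  -- membership of D in V
  have hD : D ∈ V := by
    obtain ⟨k, hk⟩ : ∃ k, m - n = k + 1 := ⟨m - n - 1, by omega⟩
    have hsplit : D = f n ++ ((List.range k).map (fun i => f (n + (1 + i)))).flatten := by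
      rw [hDdef, hk, show k + 1 = 1 + k from by omega, List.range_add]
      simp [List.map_map, Function.comp_def, show List.range 1 = [0] from rfl]
    rw [← hVplus, Language.mem_mul]
    exact ⟨f n, hf n, _, hstar k _ (fun i => hf (n + (1 + i))), hsplit.symm⟩
  -- divisibility of the period
  have hdvd : v.length ∣ D.length := by
    have h1 : (s n - u.length) ≡ (s m - u.length) [MOD v.length] := hres
    have h2 := (Nat.modEq_iff_dvd' (by omega)).mp h1
    have : (s m - u.length) - (s n - u.length) = D.length := by omega
    rwa [this] at h2
  -- periodicity of uvOmega u v
  have hper : ∀ a b : ℕ, u.length ≤ a → u.length ≤ b →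
      (a - u.length) % v.length = (b - u.length) % v.length →
      uvOmega u v a = uvOmega u v b := by
    intro a b ha hb hab
    simp only [uvOmega, dif_neg (Nat.not_lt.2 ha), dif_neg (Nat.not_lt.2 hb), hab]
  have hsnL : (L n).length = s n := rfl
  have hsmL : (L m).length = s m := rfl
  refine ⟨L n, hu', D, hD, ?_⟩
  funext k
  by_cases hk : k < (L n).length
  · have h1 : uvOmega (L n) D k = (L n).get ⟨k, hk⟩ := by
      simp only [uvOmega, dif_pos hk]
    rw [h1, hcat n k hk]
  · push_neg at hk
    have hksn : s n ≤ k := hk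
    have hj : (k - s n) % D.length < D.length := Nat.mod_lt _ hDpos
    set j := (k - s n) % D.length with hjdef
    have hlt : s n + j < s m := by omega
    have hltL : s n + j < (L m).length := hlt
    have h1 : uvOmega (L n) D k = D[j] := by
      simp only [uvOmega, dif_neg (Nat.not_lt.2 hk)]
      exact List.getD_eq_getElem D default hj
    have h2 : D[j] = uvOmega u v (s n + j) := by
      rw [← hcat m (s n + j) hltL]
      simp only [List.get_eq_getElem]
      rw [List.getElem_of_eq hLm hltL, List.getElem_append_right (by omega)]
      congr 1
      omega
    have h3 : uvOmega u v (s n + j) = uvOmega u v k := by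
      apply hper _ _ (by omega) (by omega)
      have hmod : j ≡ (k - s n) [MOD v.length] :=
        ((Nat.mod_modEq (k - s n) D.length).of_dvd hdvd)
      have hmod2 : (s n - u.length) + j ≡ (s n - u.length) + (k - s n) [MOD v.length] :=
        hmod.add_left _
      have e1 : s n + j - u.length = (s n - u.length) + j := by omega
      have e2 : k - u.length = (s n - u.length) + (k - s n) := by omega
      rw [e1, e2]
      exact hmod2
    rw [h1, h2, h3]
end

section
/- For every rational expression t, the sequential splitting relation ∇_t is a finite set and every split (t₀,t₁) ∈ ∇_t satisfies ⟦t₀·t₁⟧ ⊆ ⟦t⟧. -/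
/-- The sequential splitting relation `∇`, as a finite list of splits. -/
def nabla {A : Type} : RExp A → List (RExp A × RExp A)
  | .zero => []
  | .one => [(.one, .one)]
  | .char a => [(.one, .char a), (.char a, .one)]
  | .add t r => nabla t ++ nabla r
  | .mul t r => (nabla t).map (fun p => (p.1, .mul p.2 r)) ++
      (nabla r).map (fun p => (.mul t p.1, p.2))
  | .star t => (nabla t).map (fun p => (.mul (.star t) p.1, .mul p.2 (.star t))) ++
      [(.one, .one), (.mul (.star t) t, .one)]

/-- `∇_t` is finite and every split `(t₀,t₁) ∈ ∇_t` satisfies `⟦t₀·t₁⟧ ⊆ ⟦t⟧`. -/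
theorem nabla_finite_and_sound (A : Type) [Fintype A] (t : RExp A) :
    {p | p ∈ nabla t}.Finite ∧
      ∀ p ∈ nabla t, (RExp.mul p.1 p.2).lang ≤ t.lang := by
  refine ⟨(nabla t).finite_toSet, ?_⟩
  induction t with
  | zero => intro p hp; simp [nabla] at hp
  | one =>
    intro p hp; simp [nabla] at hp
    subst hp; simp [RExp.lang]
  | char a =>
    intro p hp; simp [nabla] at hp
    rcases hp with hp | hp <;> subst hp <;> simp [RExp.lang]
  | add t r iht ihr =>
    intro p hp
    simp only [nabla, List.mem_append] at hp
    rcases hp with hp | hp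
    · exact le_trans (iht p hp) le_sup_left
    · exact le_trans (ihr p hp) le_sup_right
  | mul t r iht ihr =>
    intro p hp
    simp only [nabla, List.mem_append, List.mem_map] at hp
    rcases hp with ⟨q, hq, rfl⟩ | ⟨q, hq, rfl⟩
    · have := iht q hq
      simp only [RExp.lang] at this ⊢
      calc q.1.lang * (q.2.lang * r.lang) = (q.1.lang * q.2.lang) * r.lang := by
            rw [mul_assoc]
        _ ≤ t.lang * r.lang := mul_le_mul_left this _
    · have := ihr q hq
      simp only [RExp.lang] at this ⊢
      calc (t.lang * q.1.lang) * q.2.lang = t.lang * (q.1.lang * q.2.lang) := by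
            rw [mul_assoc]
        _ ≤ t.lang * r.lang := mul_le_mul_right this _
  | star t iht =>
    intro p hp
    simp only [nabla, List.mem_append, List.mem_map, List.mem_cons,
      List.mem_singleton, List.not_mem_nil, or_false] at hp
    rcases hp with ⟨q, hq, rfl⟩ | hp | hp
    · have h := iht q hq
      simp only [RExp.lang] at h ⊢
      have h1 : (KStar.kstar t.lang * q.1.lang) * (q.2.lang * KStar.kstar t.lang)
          = KStar.kstar t.lang * (q.1.lang * q.2.lang) * KStar.kstar t.lang := by
        simp [mul_assoc]
      rw [h1]
      calc KStar.kstar t.lang * (q.1.lang * q.2.lang) * KStar.kstar t.lang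
          ≤ KStar.kstar t.lang * t.lang * KStar.kstar t.lang :=
            mul_le_mul_left (mul_le_mul_right h _) _
        _ ≤ KStar.kstar t.lang * KStar.kstar t.lang :=
            mul_le_mul_left (kstar_mul_le_kstar) _
        _ = KStar.kstar t.lang := kstar_mul_kstar _
    · subst hp
      simp only [RExp.lang]
      rw [mul_one]
      exact one_le_kstar
    · subst hp
      simp only [RExp.lang]
      rw [mul_one]
      exact kstar_mul_le_kstar
end

section
/- For every rational expression t and words u, v with u·v ∈ ⟦t⟧, there exists a split (t₀,t₁) ∈ ∇_t with u ∈ ⟦t₀⟧ and v ∈ ⟦t₁⟧. -/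
lemma star_aux {A : Type} (t : RExp A)
    (IH : ∀ u v : List A, u ++ v ∈ t.lang → ∃ p ∈ nabla t, u ∈ p.1.lang ∧ v ∈ p.2.lang) :
    ∀ (L : List (List A)), (∀ w ∈ L, w ∈ t.lang) → ∀ u v : List A, u ++ v = L.flatten →
      ∃ p ∈ nabla t.star, u ∈ p.1.lang ∧ v ∈ p.2.lang := by
  intro L
  induction L with
  | nil =>
    intro _ u v h
    simp only [List.flatten_nil] at h
    obtain ⟨rfl, rfl⟩ := List.append_eq_nil_iff.mp h
    refine ⟨(.one, .one), by simp [nabla], ?_, ?_⟩ <;>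
      simp [RExp.lang, Language.mem_one]
  | cons w L ihL =>
    intro hmem u v h
    have hw : w ∈ t.lang := hmem w (by simp)
    simp only [List.flatten_cons] at h
    rcases List.append_eq_append_iff.mp h with ⟨c, hwc, hvc⟩ | ⟨c, huc, hjc⟩
    · -- w = u ++ c, v = c ++ L.flatten
      obtain ⟨⟨t0, t1⟩, hp, hu0, hc1⟩ := IH u c (by rw [← hwc]; exact hw)
      refine ⟨(.mul (.star t) t0, .mul t1 (.star t)), ?_, ?_, ?_⟩
      · simp only [nabla, List.mem_append, List.mem_map]
        exact Or.inl ⟨(t0, t1), hp, rfl⟩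
      · exact ⟨[], Language.nil_mem_kstar _, u, hu0, by simp⟩
      · refine ⟨c, hc1, L.flatten, ?_, hvc.symm⟩
        exact Language.join_mem_kstar fun y hy => hmem y (by simp [hy])
    · -- u = w ++ c, L.flatten = c ++ v
      obtain ⟨p, hp, hc, hv⟩ := ihL (fun y hy => hmem y (by simp [hy])) c v hjc.symm
      simp only [nabla, List.mem_append, List.mem_map, List.mem_cons,
        List.mem_singleton] at hp
      rcases hp with ⟨⟨t0, t1⟩, hq, rfl⟩ | rfl | rfl | hfalse
      · -- p = (star t * t0, t1 * star t)
        obtain ⟨a, ha, b, hb, rfl⟩ := hc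
        obtain ⟨S, rfl, hS⟩ := Language.mem_kstar.mp ha
        refine ⟨(.mul (.star t) t0, .mul t1 (.star t)), ?_, ?_, hv⟩
        · simp only [nabla, List.mem_append, List.mem_map]
          exact Or.inl ⟨(t0, t1), hq, rfl⟩
        · refine ⟨w ++ S.flatten, ?_, b, hb, by simp [huc]⟩
          have : w ++ S.flatten = (w :: S).flatten := by simp
          rw [this]
          refine Language.join_mem_kstar ?_
          rintro y hy
          rcases List.mem_cons.mp hy with rfl | hy
          exacts [hw, hS y hy]
      · -- p = (1,1), c = []
        have hc0 : c = [] := hc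
        refine ⟨(.mul (.star t) t, .one), by simp [nabla], ?_, hv⟩
        exact ⟨[], Language.nil_mem_kstar _, w, hw, by simp [huc, hc0]⟩
      · -- p = (star t * t, 1)
        obtain ⟨a, ha, b, hb, rfl⟩ := hc
        obtain ⟨S, rfl, hS⟩ := Language.mem_kstar.mp ha
        refine ⟨(.mul (.star t) t, .one), by simp [nabla], ?_, hv⟩
        refine ⟨w ++ S.flatten, ?_, b, hb, by simp [huc]⟩
        have : w ++ S.flatten = (w :: S).flatten := by simp
        rw [this]
        refine Language.join_mem_kstar ?_
        rintro y hy
        rcases List.mem_cons.mp hy with rfl | hy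
        exacts [hw, hS y hy]
      · simp at hfalse

/-- If `u·v ∈ ⟦t⟧` then some split `(t₀,t₁) ∈ ∇_t` has `u ∈ ⟦t₀⟧`, `v ∈ ⟦t₁⟧`. -/
theorem nabla_complete (A : Type) [Fintype A] (t : RExp A) (u v : List A)
    (h : u ++ v ∈ t.lang) :
    ∃ p ∈ nabla t, u ∈ p.1.lang ∧ v ∈ p.2.lang := by
  induction t generalizing u v with
  | zero => simp [RExp.lang] at h
  | one =>
    simp only [RExp.lang, Language.mem_one] at h
    obtain ⟨rfl, rfl⟩ := List.append_eq_nil_iff.mp h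
    exact ⟨(.one, .one), by simp [nabla], by simp [RExp.lang, Language.mem_one],
      by simp [RExp.lang, Language.mem_one]⟩
  | char a =>
    simp only [RExp.lang, Set.mem_singleton_iff] at h
    rcases u with _ | ⟨x, u⟩
    · simp only [List.nil_append] at h
      exact ⟨(.one, .char a), by simp [nabla], by simp [RExp.lang, Language.mem_one],
        by simp [RExp.lang, h]⟩
    · have h' : (x :: u) ++ v = [a] := h
      simp only [List.cons_append, List.cons.injEq] at h'
      obtain ⟨hxa, hnil⟩ := h'
      subst hxa
      obtain ⟨rfl, rfl⟩ := List.append_eq_nil_iff.mp hnil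
      refine ⟨(.char x, .one), by simp [nabla], rfl, ?_⟩
      simp [RExp.lang, Language.mem_one]
  | add t r iht ihr =>
    rcases h with h | h
    · obtain ⟨p, hp, h1, h2⟩ := iht u v h
      exact ⟨p, by simp [nabla, hp], h1, h2⟩
    · obtain ⟨p, hp, h1, h2⟩ := ihr u v h
      exact ⟨p, by simp [nabla, hp], h1, h2⟩
  | mul t r iht ihr =>
    obtain ⟨a, ha, b, hb, hab⟩ := h
    rcases List.append_eq_append_iff.mp hab.symm with ⟨c, hac, hbc⟩ | ⟨c, huc, hbc⟩
    · obtain ⟨⟨t0, t1⟩, hp, h1, h2⟩ := iht u c (by rw [← hac]; exact ha)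
      refine ⟨(t0, .mul t1 r), ?_, h1, ⟨c, h2, b, hb, hbc.symm⟩⟩
      simp only [nabla, List.mem_append, List.mem_map]
      exact Or.inl ⟨(t0, t1), hp, rfl⟩
    · obtain ⟨⟨r0, r1⟩, hp, h1, h2⟩ := ihr c v (by rw [← hbc]; exact hb)
      refine ⟨(.mul t r0, r1), ?_, ⟨a, ha, c, h1, huc.symm⟩, h2⟩
      simp only [nabla, List.mem_append, List.mem_map]
      exact Or.inr ⟨(r0, r1), hp, rfl⟩
  | star t ih =>
    obtain ⟨S, hS, hmem⟩ := Language.mem_kstar.mp h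
    exact star_aux t (fun u v h => ih u v h) S hmem u v hS
end

section
/- For every rational expression t: if (t₀,t₁) ∈ ∇_t and (r₀,r₁) ∈ ∇_{t₁}, then there exists (s₀,s₁) ∈ ∇_t with ⟦t₀·r₀⟧ ⊆ ⟦s₀⟧ and ⟦r₁⟧ ⊆ ⟦s₁⟧. -/
section Aux
variable {A : Type}

open RExp in
lemma nabla_sound : ∀ (t : RExp A), ∀ p ∈ nabla t, p.1.lang * p.2.lang ≤ t.lang := by
  intro t
  induction t with
  | zero => intro p hp; simp [nabla] at hp
  | one =>
    intro p hp
    simp only [nabla, List.mem_singleton] at hp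
    subst hp; simp [RExp.lang]
  | char a =>
    intro p hp
    simp only [nabla, List.mem_cons, List.mem_singleton, List.not_mem_nil, or_false] at hp
    rcases hp with rfl | rfl <;> simp [RExp.lang]
  | add t r iht ihr =>
    intro p hp
    simp only [nabla, List.mem_append] at hp
    simp only [RExp.lang]
    rcases hp with hp | hp
    · exact le_trans (iht p hp) (le_add_of_le_left le_rfl)
    · exact le_trans (ihr p hp) (le_add_of_le_right le_rfl)
  | mul t r iht ihr =>
    intro p hp
    simp only [nabla, List.mem_append, List.mem_map] at hp
    rcases hp with ⟨a, ha, rfl⟩ | ⟨a, ha, rfl⟩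
    · simp only [RExp.lang]
      rw [← mul_assoc]
      exact mul_le_mul' (iht a ha) le_rfl
    · simp only [RExp.lang]
      rw [mul_assoc]
      exact mul_le_mul' le_rfl (ihr a ha)
  | star t iht =>
    intro p hp
    simp only [nabla, List.mem_append, List.mem_map, List.mem_cons, List.mem_singleton,
      List.not_mem_nil, or_false] at hp
    rcases hp with ⟨a, ha, rfl⟩ | rfl | rfl
    · simp only [RExp.lang]
      calc KStar.kstar t.lang * a.1.lang * (a.2.lang * KStar.kstar t.lang)
          = KStar.kstar t.lang * (a.1.lang * a.2.lang) * KStar.kstar t.lang := by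
            rw [mul_assoc, mul_assoc, mul_assoc]
        _ ≤ KStar.kstar t.lang * t.lang * KStar.kstar t.lang :=
            mul_le_mul' (mul_le_mul' le_rfl (iht a ha)) le_rfl
        _ ≤ KStar.kstar t.lang * KStar.kstar t.lang :=
            mul_le_mul' kstar_mul_le_kstar le_rfl
        _ = KStar.kstar t.lang := kstar_mul_kstar _
    · simp [RExp.lang, one_le_kstar]
    · simp only [RExp.lang, mul_one]
      exact kstar_mul_le_kstar

lemma nabla_transfer_aux : ∀ (t : RExp A), ∀ p ∈ nabla t, ∀ q ∈ nabla p.2,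
    ∃ s ∈ nabla t, p.1.lang * q.1.lang ≤ s.1.lang ∧ q.2.lang ≤ s.2.lang := by
  intro t
  induction t with
  | zero => intro p hp; simp [nabla] at hp
  | one =>
    intro p hp q hq
    simp only [nabla, List.mem_singleton] at hp
    subst hp
    simp only [nabla, List.mem_singleton] at hq
    subst hq
    exact ⟨(.one, .one), by simp [nabla], by simp [RExp.lang], le_rfl⟩
  | char a =>
    intro p hp q hq
    simp only [nabla, List.mem_cons, List.mem_singleton, List.not_mem_nil, or_false] at hp
    rcases hp with rfl | rfl
    · simp only [nabla, List.mem_cons, List.mem_singleton, List.not_mem_nil, or_false] at hq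
      rcases hq with rfl | rfl
      · exact ⟨(.one, .char a), by simp [nabla], by simp [RExp.lang], le_rfl⟩
      · exact ⟨(.char a, .one), by simp [nabla], by simp [RExp.lang], le_rfl⟩
    · simp only [nabla, List.mem_singleton] at hq
      subst hq
      exact ⟨(.char a, .one), by simp [nabla], by simp [RExp.lang], le_rfl⟩
  | add t r iht ihr =>
    intro p hp q hq
    simp only [nabla, List.mem_append] at hp
    rcases hp with hp | hp
    · obtain ⟨s, hs, h1, h2⟩ := iht p hp q hq
      exact ⟨s, List.mem_append_left _ hs, h1, h2⟩
    · obtain ⟨s, hs, h1, h2⟩ := ihr p hp q hq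
      exact ⟨s, List.mem_append_right _ hs, h1, h2⟩
  | mul t r iht ihr =>
    intro p hp q hq
    simp only [nabla, List.mem_append, List.mem_map] at hp
    rcases hp with ⟨a, ha, rfl⟩ | ⟨a, ha, rfl⟩
    · -- p = (a.1, a.2 * r)
      simp only [nabla, List.mem_append, List.mem_map] at hq
      rcases hq with ⟨b, hb, rfl⟩ | ⟨b, hb, rfl⟩
      · obtain ⟨s, hs, h1, h2⟩ := iht a ha b hb
        refine ⟨(s.1, .mul s.2 r), List.mem_append_left _ (List.mem_map_of_mem hs), h1, ?_⟩
        simp only [RExp.lang]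
        exact mul_le_mul' h2 le_rfl
      · refine ⟨(.mul t b.1, b.2), List.mem_append_right _ (List.mem_map_of_mem hb), ?_, le_rfl⟩
        simp only [RExp.lang]
        rw [← mul_assoc]
        exact mul_le_mul' (nabla_sound t a ha) le_rfl
    · -- p = (t * a.1, a.2) with a ∈ ∇r
      obtain ⟨s, hs, h1, h2⟩ := ihr a ha q hq
      refine ⟨(.mul t s.1, s.2), List.mem_append_right _ (List.mem_map_of_mem hs), ?_, h2⟩
      simp only [RExp.lang]
      rw [mul_assoc]
      exact mul_le_mul' le_rfl h1
  | star t iht =>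
    intro p hp q hq
    have hmemmap : ∀ a ∈ nabla t,
        (RExp.mul (.star t) a.1, RExp.mul a.2 (.star t)) ∈ nabla (RExp.star t) := by
      intro a ha
      exact List.mem_append_left _ (List.mem_map_of_mem ha)
    have hmem1 : ((RExp.one : RExp A), RExp.one) ∈ nabla (RExp.star t) := by simp [nabla]
    have hmem2 : (RExp.mul (.star t) t, (RExp.one : RExp A)) ∈ nabla (RExp.star t) := by
      simp [nabla]
    simp only [nabla, List.mem_append, List.mem_map, List.mem_cons, List.mem_singleton,
      List.not_mem_nil, or_false] at hp
    rcases hp with ⟨a, ha, rfl⟩ | rfl | rfl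
    · -- p = (t* * a.1, a.2 * t*)
      simp only [nabla, List.mem_append, List.mem_map, List.mem_cons, List.mem_singleton,
        List.not_mem_nil, or_false] at hq
      rcases hq with ⟨b, hb, rfl⟩ | ⟨c, hc, rfl⟩
      · -- q = (b.1, b.2 * t*), b ∈ ∇a.2
        obtain ⟨s, hs, h1, h2⟩ := iht a ha b hb
        refine ⟨(.mul (.star t) s.1, .mul s.2 (.star t)), hmemmap s hs, ?_, ?_⟩
        · simp only [RExp.lang]
          rw [mul_assoc]
          exact mul_le_mul' le_rfl h1
        · simp only [RExp.lang]
          exact mul_le_mul' h2 le_rfl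
      · -- q = (a.2 * c.1, c.2), c ∈ ∇(t*)
        have hsound := nabla_sound t a ha
        rcases hc with ⟨w, hw, rfl⟩ | rfl | rfl
        · -- c = (t* * w.1, w.2 * t*)
          refine ⟨(.mul (.star t) w.1, .mul w.2 (.star t)), hmemmap w hw, ?_, le_rfl⟩
          simp only [RExp.lang]
          calc KStar.kstar t.lang * a.1.lang *
                (a.2.lang * (KStar.kstar t.lang * w.1.lang))
              = KStar.kstar t.lang * (a.1.lang * a.2.lang) * KStar.kstar t.lang * w.1.lang := by
                simp only [mul_assoc]
            _ ≤ KStar.kstar t.lang * t.lang * KStar.kstar t.lang * w.1.lang :=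
                mul_le_mul' (mul_le_mul' (mul_le_mul' le_rfl hsound) le_rfl) le_rfl
            _ ≤ KStar.kstar t.lang * KStar.kstar t.lang * w.1.lang :=
                mul_le_mul' (mul_le_mul' kstar_mul_le_kstar le_rfl) le_rfl
            _ = KStar.kstar t.lang * w.1.lang := by rw [kstar_mul_kstar]
        · -- c = (1, 1)
          refine ⟨(.mul (.star t) t, .one), hmem2, ?_, le_rfl⟩
          simp only [RExp.lang, mul_one]
          rw [mul_assoc]
          exact mul_le_mul' le_rfl hsound
        · -- c = (t* * t, 1)
          refine ⟨(.mul (.star t) t, .one), hmem2, ?_, le_rfl⟩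
          simp only [RExp.lang]
          calc KStar.kstar t.lang * a.1.lang *
                (a.2.lang * (KStar.kstar t.lang * t.lang))
              = KStar.kstar t.lang * (a.1.lang * a.2.lang) * KStar.kstar t.lang * t.lang := by
                simp only [mul_assoc]
            _ ≤ KStar.kstar t.lang * t.lang * KStar.kstar t.lang * t.lang :=
                mul_le_mul' (mul_le_mul' (mul_le_mul' le_rfl hsound) le_rfl) le_rfl
            _ ≤ KStar.kstar t.lang * KStar.kstar t.lang * t.lang :=
                mul_le_mul' (mul_le_mul' kstar_mul_le_kstar le_rfl) le_rfl
            _ = KStar.kstar t.lang * t.lang := by rw [kstar_mul_kstar]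
    · -- p = (1, 1)
      simp only [nabla, List.mem_singleton] at hq
      subst hq
      exact ⟨(.one, .one), hmem1, by simp [RExp.lang], le_rfl⟩
    · -- p = (t* * t, 1)
      simp only [nabla, List.mem_singleton] at hq
      subst hq
      exact ⟨(.mul (.star t) t, .one), hmem2, by simp [RExp.lang], le_rfl⟩

end Aux

/-- Splitting transfer: if `(t₀,t₁) ∈ ∇_t` and `(r₀,r₁) ∈ ∇_{t₁}`, then there is
`(s₀,s₁) ∈ ∇_t` with `⟦t₀·r₀⟧ ⊆ ⟦s₀⟧` and `⟦r₁⟧ ⊆ ⟦s₁⟧`. -/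
theorem nabla_transfer (A : Type) [Fintype A] (t : RExp A)
    (p : RExp A × RExp A) (hp : p ∈ nabla t)
    (q : RExp A × RExp A) (hq : q ∈ nabla p.2) :
    ∃ s ∈ nabla t, (RExp.mul p.1 q.1).lang ≤ s.1.lang ∧ q.2.lang ≤ s.2.lang := by
  obtain ⟨s, hs, h1, h2⟩ := nabla_transfer_aux t p hp q hq
  exact ⟨s, hs, h1, h2⟩
end
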